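/- arXiv:1905.02131 — 3 statements merged into one kernel-verified Lean document; each statement's English description precedes it below -/
import Mathlib

section
/- Let Ψ(x) := (2/3)x^{3/2} - (3/4)d² ln x + φ for x ≥ x₀, where d, φ ∈ ℝ and x₀ > 1 is large enough that Ψ'(x) = x^{1/2} - (3/4)d²x^{-1} ≠ 0 for x ≥ x₀. Define g(x) := d·(-x)^{-1/4} cos Ψ(-x) for x < -x₀ and g(x) := 0 otherwise. Then the improper integral ĝ(ξ) := lim_{y→∞} ∫_{-y}^{-x₀} g(x) e^{iξx} dx exists for every ξ ∈ ℝ and ĝ is continuous at ξ = 0, i.e. lim_{ξ→0} (ĝ(ξ) - ĝ(0)) = 0. -/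
open Filter Real intervalIntegral
open MeasureTheory

noncomputable def pp (d u : ℝ) : ℝ := u ^ ((1:ℝ)/2) - 3/4*d^2/u
noncomputable def pd (d u : ℝ) : ℝ := 1/2 * u ^ (-(1:ℝ)/2) + 3/4*d^2/u^2
noncomputable def cc (u : ℝ) : ℝ := u ^ (-(1:ℝ)/4)
noncomputable def cd (u : ℝ) : ℝ := -(1/4) * u ^ (-(5:ℝ)/4)
noncomputable def aa (d u : ℝ) : ℝ := cc u / pp d u
noncomputable def ad (d u : ℝ) : ℝ := cd u / pp d u - cc u * pd d u / (pp d u)^2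
noncomputable def bb (d u : ℝ) : ℝ := cc u / (pp d u)^2
noncomputable def bd (d u : ℝ) : ℝ := cd u / (pp d u)^2 - 2 * cc u * pd d u / (pp d u)^3
noncomputable def EE (ξ u : ℝ) : ℂ := Complex.exp (-(Complex.I * ξ) * u)

lemma hasDerivAt_pp (d : ℝ) {u : ℝ} (hu : 0 < u) : HasDerivAt (pp d) (pd d u) u := by
  have h1 : HasDerivAt (fun v : ℝ => v ^ ((1:ℝ)/2)) ((1/2) * u ^ ((1:ℝ)/2 - 1)) u :=
    Real.hasDerivAt_rpow_const (Or.inl hu.ne')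
  have h2 : HasDerivAt (fun v : ℝ => 3/4*d^2/v) (-(3/4*d^2) / u^2) u := by
    have := (hasDerivAt_inv hu.ne').const_mul (3/4*d^2)
    simp only [div_eq_mul_inv]
    refine this.congr_deriv ?_
    field_simp
  have := h1.sub h2
  refine this.congr_deriv ?_
  have : (1:ℝ)/2 - 1 = -(1:ℝ)/2 := by norm_num
  rw [this]; unfold pd; ring
lemma hasDerivAt_cc {u : ℝ} (hu : 0 < u) : HasDerivAt cc (cd u) u := by
  have h1 : HasDerivAt (fun v : ℝ => v ^ (-(1:ℝ)/4)) ((-(1:ℝ)/4) * u ^ (-(1:ℝ)/4 - 1)) u :=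
    Real.hasDerivAt_rpow_const (Or.inl hu.ne')
  refine h1.congr_deriv ?_
  have : -(1:ℝ)/4 - 1 = -(5:ℝ)/4 := by norm_num
  rw [this]; unfold cd; ring
lemma hasDerivAt_aa (d : ℝ) {u : ℝ} (hu : 0 < u) (hp : pp d u ≠ 0) :
    HasDerivAt (aa d) (ad d u) u := by
  have := (hasDerivAt_cc hu).div (hasDerivAt_pp d hu) hp
  refine this.congr_deriv ?_
  unfold ad; field_simp
lemma hasDerivAt_bb (d : ℝ) {u : ℝ} (hu : 0 < u) (hp : pp d u ≠ 0) :
    HasDerivAt (bb d) (bd d u) u := by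
  have hsq : HasDerivAt (fun v => (pp d v)^2) (2 * pp d u ^ 1 * pd d u) u :=
    by have := (hasDerivAt_pp d hu).pow 2; exact this.congr_deriv (by norm_num)
  have := (hasDerivAt_cc hu).div hsq (pow_ne_zero 2 hp)
  refine this.congr_deriv ?_
  unfold bd; field_simp
lemma hasDerivAt_EE (ξ : ℝ) (u : ℝ) : HasDerivAt (EE ξ) (-(Complex.I*ξ) * EE ξ u) u := by
  have h0 : HasDerivAt (fun v : ℝ => (v:ℂ)) 1 u := by
    exact Complex.ofRealCLM.hasDerivAt (x := u)
  have h1 : HasDerivAt (fun v : ℝ => -(Complex.I*ξ) * (v:ℂ)) (-(Complex.I*ξ)) u := by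
    simpa using h0.const_mul (-(Complex.I*ξ))
  have := h1.cexp
  refine this.congr_deriv ?_
  rw [mul_comm]; rfl

noncomputable def HH (d : ℝ) (Ψ : ℝ → ℝ) (ξ u : ℝ) : ℂ :=
  ((Real.sin (Ψ u) * aa d u : ℝ) : ℂ) * EE ξ u
    - Complex.I * ξ * ((Real.cos (Ψ u) * bb d u : ℝ) : ℂ) * EE ξ u
noncomputable def ff (d : ℝ) (Ψ : ℝ → ℝ) (ξ u : ℝ) : ℂ :=
  ((Real.cos (Ψ u) * cc u : ℝ) : ℂ) * EE ξ u
noncomputable def RR (d : ℝ) (Ψ : ℝ → ℝ) (ξ u : ℝ) : ℂ :=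
  ((Real.sin (Ψ u) * ad d u : ℝ) : ℂ) * EE ξ u
    - Complex.I * ξ * ((Real.cos (Ψ u) * bd d u : ℝ) : ℂ) * EE ξ u
    - (ξ:ℂ)^2 * ((Real.cos (Ψ u) * bb d u : ℝ) : ℂ) * EE ξ u

lemma hasDerivAt_HH (d : ℝ) (Ψ : ℝ → ℝ) (ξ : ℝ) {u : ℝ} (hu : 0 < u) (hp : pp d u ≠ 0)
    (hΨd : HasDerivAt Ψ (pp d u) u) :
    HasDerivAt (HH d Ψ ξ) (ff d Ψ ξ u + RR d Ψ ξ u) u := by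
  have hS : HasDerivAt (fun v => Real.sin (Ψ v) * aa d v)
      (Real.cos (Ψ u) * pp d u * aa d u + Real.sin (Ψ u) * ad d u) u :=
    (hΨd.sin).mul (hasDerivAt_aa d hu hp)
  have hC : HasDerivAt (fun v => Real.cos (Ψ v) * bb d v)
      (-Real.sin (Ψ u) * pp d u * bb d u + Real.cos (Ψ u) * bd d u) u :=
    (hΨd.cos).mul (hasDerivAt_bb d hu hp)
  have hE := hasDerivAt_EE ξ u
  have h1 := (hS.ofReal_comp).mul hE
  have h2 := ((hC.ofReal_comp).mul hE).const_mul (Complex.I * ξ)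
  have h := h1.sub h2
  have hpa : (pp d u : ℂ) * (aa d u : ℂ) = (cc u : ℂ) := by
    have : pp d u * aa d u = cc u := by unfold aa; field_simp
    exact_mod_cast this
  have hpb : (pp d u : ℂ) * (bb d u : ℂ) = (aa d u : ℂ) := by
    have : pp d u * bb d u = aa d u := by unfold aa bb; field_simp
    exact_mod_cast this
  refine (h.congr_of_eventuallyEq ?_).congr_deriv ?_
  · exact Filter.Eventually.of_forall (fun v => by
      simp only [Pi.mul_apply, Pi.sub_apply]; unfold HH; push_cast; ring)
  symm
  unfold ff RR
  push_cast
  linear_combination (-(EE ξ u * Complex.cos ((Ψ u : ℂ)))) * hpa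
    - (Complex.I * ξ * Complex.sin ((Ψ u : ℂ)) * EE ξ u) * hpb
    - (Complex.cos ((Ψ u : ℂ)) * (bb d u : ℂ) * EE ξ u * (ξ:ℂ)^2) * Complex.I_sq

lemma pp_lower (d x₀ : ℝ) (hx₀ : 1 < x₀) (hne : ∀ u ≥ x₀, pp d u ≠ 0) :
    ∃ m > 0, ∀ u ≥ x₀, m * u ^ ((1:ℝ)/2) ≤ pp d u := by
  set U : ℝ := max x₀ (((3:ℝ)/2*d^2) ^ ((2:ℝ)/3)) with hUdef
  have hU : x₀ ≤ U := le_max_left _ _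
  have hUpos : (1:ℝ) < U := lt_of_lt_of_le hx₀ hU
  have stepU : ∀ u, U ≤ u → (1/2) * u ^ ((1:ℝ)/2) ≤ pp d u := by
    intro u hu
    have hu1 : (1:ℝ) < u := lt_of_lt_of_le hUpos hu
    have hu0 : (0:ℝ) < u := by linarith
    have hd : ((3:ℝ)/2*d^2) ^ ((2:ℝ)/3) ≤ u := le_trans (le_max_right _ _) hu
    have hd2 : (3:ℝ)/2*d^2 ≤ u ^ ((3:ℝ)/2) := by
      have h0 : (0:ℝ) ≤ (3:ℝ)/2*d^2 := by positivity
      calc (3:ℝ)/2*d^2 = (((3:ℝ)/2*d^2) ^ ((2:ℝ)/3)) ^ ((3:ℝ)/2) := by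
            rw [← Real.rpow_mul h0]; norm_num
        _ ≤ u ^ ((3:ℝ)/2) := Real.rpow_le_rpow (Real.rpow_nonneg h0 _) hd (by norm_num)
    have hsplit : u ^ ((3:ℝ)/2) = u ^ ((1:ℝ)/2) * u := by
      rw [show (3:ℝ)/2 = 1/2 + 1 by norm_num, Real.rpow_add hu0, Real.rpow_one]
    have : 3/4*d^2/u ≤ 1/2 * u ^ ((1:ℝ)/2) := by
      rw [div_le_iff₀ hu0]
      nlinarith [hd2, hsplit]
    unfold pp
    linarith
  have posU : ∀ u, U ≤ u → 0 < pp d u := by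
    intro u hu
    have hu0 : (0:ℝ) < u := by nlinarith [lt_of_lt_of_le hUpos hu]
    have := stepU u hu
    nlinarith [Real.rpow_pos_of_pos hu0 ((1:ℝ)/2)]
  have contp : ContinuousOn (pp d) (Set.Ici x₀) := by
    apply ContinuousOn.sub
    · exact fun u hu => (Real.continuousAt_rpow_const u _ (Or.inr (by norm_num))).continuousWithinAt
    · exact continuousOn_const.div continuousOn_id
        (fun u hu => by have : (1:ℝ) < u := lt_of_lt_of_le hx₀ hu; positivity)
  have pos : ∀ u, x₀ ≤ u → 0 < pp d u := by
    intro u hu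
    rcases lt_trichotomy (pp d u) 0 with hlt | heq | hgt
    · exfalso
      set V : ℝ := max U u with hV
      have hUV : U ≤ V := le_max_left _ _
      have huV : u ≤ V := le_max_right _ _
      have hposV : 0 < pp d V := posU V hUV
      have hsub : Set.Icc u V ⊆ Set.Ici x₀ := fun z hz => le_trans hu hz.1
      have := intermediate_value_Icc huV (contp.mono hsub)
      have h0 : (0:ℝ) ∈ Set.Icc (pp d u) (pp d V) := ⟨le_of_lt hlt, le_of_lt hposV⟩
      obtain ⟨z, hz, hz0⟩ := this h0
      exact hne z (le_trans hu hz.1) hz0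
    · exact absurd heq (hne u hu)
    · exact hgt
  obtain ⟨z, hzmem, hzmin⟩ := isCompact_Icc.exists_isMinOn (f := pp d)
    ⟨x₀, Set.left_mem_Icc.mpr hU⟩ (contp.mono (fun w hw => hw.1))
  have hc0 : 0 < pp d z := pos z hzmem.1
  have hUr : (0:ℝ) < U ^ ((1:ℝ)/2) := Real.rpow_pos_of_pos (by linarith) _
  refine ⟨min (1/2) (pp d z / U ^ ((1:ℝ)/2)), by positivity, ?_⟩
  intro u hu
  have hu0 : (0:ℝ) < u := by linarith
  have hur : (0:ℝ) < u ^ ((1:ℝ)/2) := Real.rpow_pos_of_pos hu0 _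
  rcases le_total u U with h | h
  · have h1 : u ^ ((1:ℝ)/2) ≤ U ^ ((1:ℝ)/2) :=
      Real.rpow_le_rpow (le_of_lt hu0) h (by norm_num)
    calc min (1/2) (pp d z / U ^ ((1:ℝ)/2)) * u ^ ((1:ℝ)/2)
        ≤ (pp d z / U ^ ((1:ℝ)/2)) * U ^ ((1:ℝ)/2) := by
          apply mul_le_mul (min_le_right _ _) h1 (le_of_lt hur)
          positivity
      _ = pp d z := by field_simp
      _ ≤ pp d u := hzmin ⟨hu, h⟩
  · calc min (1/2) (pp d z / U ^ ((1:ℝ)/2)) * u ^ ((1:ℝ)/2)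
        ≤ 1/2 * u ^ ((1:ℝ)/2) := by
          apply mul_le_mul_of_nonneg_right (min_le_left _ _) (le_of_lt hur)
      _ ≤ pp d u := stepU u h

set_option maxHeartbeats 1000000 in
lemma pp_bounds (d m : ℝ) (hm0 : 0 < m) {u : ℝ} (hu1 : 1 < u)
    (hp1 : m * u ^ ((1:ℝ)/2) ≤ pp d u) :
    |aa d u| ≤ 1/m * u ^ (-(3:ℝ)/4) ∧
    |bb d u| ≤ 1/m^2 * u ^ (-(5:ℝ)/4) ∧
    |ad d u| ≤ (1/(4*m) + (1/2 + 3/4*d^2)/m^2) * u ^ (-(5:ℝ)/4) ∧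
    |bd d u| ≤ (1/(4*m^2) + 2*(1/2 + 3/4*d^2)/m^3) * u ^ (-(5:ℝ)/4) := by
  have hu0 : (0:ℝ) < u := by linarith
  have hrpos : ∀ a : ℝ, 0 < u ^ a := fun a => Real.rpow_pos_of_pos hu0 a
  have key : ∀ a b : ℝ, a ≤ b → u ^ a ≤ u ^ b :=
    fun a b h => Real.rpow_le_rpow_of_exponent_le hu1.le h
  have hadd : ∀ a b : ℝ, u ^ (a+b) = u ^ a * u ^ b := Real.rpow_add hu0
  have hmul : ∀ a b c : ℝ, a + b = c → u ^ a * u ^ b = u ^ c :=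
    fun a b c h => by rw [← hadd, h]
  have hinv : ∀ a : ℝ, (u ^ a)⁻¹ = u ^ (-a) := fun a => (Real.rpow_neg hu0.le a).symm
  have hs : (0:ℝ) < u ^ ((1:ℝ)/2) := hrpos _
  have hne1 : u ^ (1:ℝ) ≠ 0 := (hrpos 1).ne'
  have hne12 : u ^ ((1:ℝ)/2) ≠ 0 := (hrpos _).ne'
  have hne32 : u ^ ((3:ℝ)/2) ≠ 0 := (hrpos _).ne'
  have ppos : 0 < pp d u := lt_of_lt_of_le (by positivity) hp1
  have hu_eq : u ^ (1:ℝ) = u := Real.rpow_one u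
  have hp2 : m^2 * u ^ (1:ℝ) ≤ (pp d u)^2 := by
    have h := pow_le_pow_left₀ (by positivity : (0:ℝ) ≤ m * u ^ ((1:ℝ)/2)) hp1 2
    have e : (m * u ^ ((1:ℝ)/2))^2 = m^2 * (u ^ ((1:ℝ)/2) * u ^ ((1:ℝ)/2)) := by ring
    rw [e, hmul _ _ _ (by norm_num : (1:ℝ)/2 + 1/2 = 1)] at h
    exact h
  have hp3 : m^3 * u ^ ((3:ℝ)/2) ≤ (pp d u)^3 := by
    have h := pow_le_pow_left₀ (by positivity : (0:ℝ) ≤ m * u ^ ((1:ℝ)/2)) hp1 3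
    have e : (m * u ^ ((1:ℝ)/2))^3 = m^3 * (u ^ ((1:ℝ)/2) * u ^ ((1:ℝ)/2) * u ^ ((1:ℝ)/2)) := by
      ring
    rw [e, hmul _ _ _ (by norm_num : (1:ℝ)/2 + 1/2 = 1),
      hmul _ _ _ (by norm_num : (1:ℝ) + 1/2 = 3/2)] at h
    exact h
  have hinv1 : 1/(pp d u) ≤ 1/(m * u ^ ((1:ℝ)/2)) :=
    one_div_le_one_div_of_le (by positivity) hp1
  have hinv2 : 1/(pp d u)^2 ≤ 1/(m^2 * u ^ (1:ℝ)) :=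
    one_div_le_one_div_of_le (by positivity) hp2
  have hinv3 : 1/(pp d u)^3 ≤ 1/(m^3 * u ^ ((3:ℝ)/2)) :=
    one_div_le_one_div_of_le (by positivity) hp3
  have hccpos : (0:ℝ) < cc u := hrpos _
  have hcd : |cd u| = 1/4 * u ^ (-(5:ℝ)/4) := by
    simp only [cd]
    rw [abs_mul, abs_of_pos (hrpos _)]
    norm_num
  have hpd : |pd d u| ≤ (1/2 + 3/4*d^2) * u ^ (-(1:ℝ)/2) := by
    have h2r : (1:ℝ)/u^2 ≤ u ^ (-(1:ℝ)/2) := by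
      have e : (1:ℝ)/u^2 = u ^ (-(2:ℝ)) := by
        rw [Real.rpow_neg hu0.le, show ((2:ℝ)) = ((2:ℕ):ℝ) by norm_num,
          Real.rpow_natCast]
        norm_num
      rw [e]; exact key _ _ (by norm_num)
    have hpdnn : 0 ≤ pd d u := by
      simp only [pd]; positivity
    rw [abs_of_nonneg hpdnn]
    simp only [pd]
    have h3 : 3/4*d^2/u^2 ≤ 3/4*d^2 * u ^ (-(1:ℝ)/2) := by
      rw [div_eq_mul_one_div]
      have := mul_le_mul_of_nonneg_left h2r (by positivity : (0:ℝ) ≤ 3/4*d^2)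
      linarith
    nlinarith [hrpos (-(1:ℝ)/2)]
  set K0 : ℝ := 1/2 + 3/4*d^2 with hK0
  have hK0nn : 0 ≤ K0 := by rw [hK0]; positivity
  -- aa bound
  have haa : |aa d u| ≤ 1/m * u ^ (-(3:ℝ)/4) := by
    simp only [aa]
    rw [abs_div, abs_of_pos hccpos, abs_of_pos ppos, div_eq_mul_one_div]
    calc cc u * (1/(pp d u)) ≤ cc u * (1/(m * u ^ ((1:ℝ)/2))) :=
          mul_le_mul_of_nonneg_left hinv1 hccpos.le
      _ = 1/m * (u ^ (-(1:ℝ)/4) * (u ^ ((1:ℝ)/2))⁻¹) := by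
          simp only [cc]; ring
      _ = 1/m * u ^ (-(3:ℝ)/4) := by
          rw [hinv, hmul _ _ _ (by norm_num : -(1:ℝ)/4 + -(1/2) = -(3:ℝ)/4)]
  -- bb bound
  have hbb : |bb d u| ≤ 1/m^2 * u ^ (-(5:ℝ)/4) := by
    simp only [bb]
    rw [abs_div, abs_of_pos hccpos, abs_of_pos (pow_pos ppos 2), div_eq_mul_one_div]
    calc cc u * (1/(pp d u)^2) ≤ cc u * (1/(m^2 * u ^ (1:ℝ))) :=
          mul_le_mul_of_nonneg_left hinv2 hccpos.le
      _ = 1/m^2 * (u ^ (-(1:ℝ)/4) * (u ^ ((1:ℝ)))⁻¹) := by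
          simp only [cc]; ring
      _ = 1/m^2 * u ^ (-(5:ℝ)/4) := by
          rw [hinv, hmul _ _ _ (by norm_num : -(1:ℝ)/4 + -(1:ℝ) = -(5:ℝ)/4)]
  refine ⟨haa, hbb, ?_, ?_⟩
  -- ad bound
  · have h1 : |ad d u| ≤ |cd u| * (1/(pp d u)) + cc u * |pd d u| * (1/(pp d u)^2) := by
      simp only [ad]
      refine le_trans (abs_sub _ _) ?_
      rw [abs_div, abs_of_pos ppos, abs_div, abs_of_pos (pow_pos ppos 2),
        abs_mul, abs_of_pos hccpos]
      apply le_of_eq; ring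
    have h2 : |cd u| * (1/(pp d u)) ≤ (1/4 * u ^ (-(5:ℝ)/4)) * (1/(m * u ^ ((1:ℝ)/2))) := by
      rw [hcd]
      exact mul_le_mul_of_nonneg_left hinv1 (by positivity)
    have h3 : cc u * |pd d u| * (1/(pp d u)^2)
        ≤ (cc u * (K0 * u ^ (-(1:ℝ)/2))) * (1/(m^2 * u ^ (1:ℝ))) := by
      apply mul_le_mul (mul_le_mul_of_nonneg_left hpd hccpos.le) hinv2 (by positivity)
      positivity
    have e2 : (1/4 * u ^ (-(5:ℝ)/4)) * (1/(m * u ^ ((1:ℝ)/2))) = 1/(4*m) * u ^ (-(7:ℝ)/4) := by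
      calc (1/4 * u ^ (-(5:ℝ)/4)) * (1/(m * u ^ ((1:ℝ)/2)))
          = 1/(4*m) * (u ^ (-(5:ℝ)/4) * (u ^ ((1:ℝ)/2))⁻¹) := by ring
        _ = 1/(4*m) * u ^ (-(7:ℝ)/4) := by
            rw [hinv, hmul _ _ _ (by norm_num : -(5:ℝ)/4 + -(1/2) = -(7:ℝ)/4)]
    have e3 : (cc u * (K0 * u ^ (-(1:ℝ)/2))) * (1/(m^2 * u ^ (1:ℝ)))
        = K0/m^2 * u ^ (-(7:ℝ)/4) := by
      calc (cc u * (K0 * u ^ (-(1:ℝ)/2))) * (1/(m^2 * u ^ (1:ℝ)))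
          = K0/m^2 * (u ^ (-(1:ℝ)/4) * u ^ (-(1:ℝ)/2) * (u ^ ((1:ℝ)))⁻¹) := by
            simp only [cc]; ring
        _ = K0/m^2 * u ^ (-(7:ℝ)/4) := by
            rw [hinv, hmul _ _ _ (by norm_num : -(1:ℝ)/4 + -(1:ℝ)/2 = -(3:ℝ)/4),
              hmul _ _ _ (by norm_num : -(3:ℝ)/4 + -(1:ℝ) = -(7:ℝ)/4)]
    have h7 : u ^ (-(7:ℝ)/4) ≤ u ^ (-(5:ℝ)/4) := key _ _ (by norm_num)
    calc |ad d u| ≤ 1/(4*m) * u ^ (-(7:ℝ)/4) + K0/m^2 * u ^ (-(7:ℝ)/4) := by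
          rw [← e2, ← e3]; linarith
      _ ≤ (1/(4*m) + K0/m^2) * u ^ (-(5:ℝ)/4) := by
          have c1 : (0:ℝ) ≤ 1/(4*m) := by positivity
          have c2 : (0:ℝ) ≤ K0/m^2 := by positivity
          nlinarith [h7]
  -- bd bound
  · have h1 : |bd d u| ≤ |cd u| * (1/(pp d u)^2) + 2 * cc u * |pd d u| * (1/(pp d u)^3) := by
      simp only [bd]
      refine le_trans (abs_sub _ _) ?_
      rw [abs_div, abs_of_pos (pow_pos ppos 2), abs_div, abs_of_pos (pow_pos ppos 3),
        abs_mul, abs_mul, abs_of_pos hccpos]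
      apply le_of_eq
      rw [abs_of_nonneg (by norm_num : (0:ℝ) ≤ (2:ℝ))]
      ring
    have h2 : |cd u| * (1/(pp d u)^2) ≤ (1/4 * u ^ (-(5:ℝ)/4)) * (1/(m^2 * u ^ (1:ℝ))) := by
      rw [hcd]
      exact mul_le_mul_of_nonneg_left hinv2 (by positivity)
    have h3 : 2 * cc u * |pd d u| * (1/(pp d u)^3)
        ≤ (2 * cc u * (K0 * u ^ (-(1:ℝ)/2))) * (1/(m^3 * u ^ ((3:ℝ)/2))) := by
      apply mul_le_mul _ hinv3 (by positivity) (by positivity)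
      have := mul_le_mul_of_nonneg_left hpd (by positivity : (0:ℝ) ≤ 2 * cc u)
      linarith [this]
    have e2 : (1/4 * u ^ (-(5:ℝ)/4)) * (1/(m^2 * u ^ (1:ℝ))) = 1/(4*m^2) * u ^ (-(9:ℝ)/4) := by
      calc (1/4 * u ^ (-(5:ℝ)/4)) * (1/(m^2 * u ^ (1:ℝ)))
          = 1/(4*m^2) * (u ^ (-(5:ℝ)/4) * (u ^ ((1:ℝ)))⁻¹) := by ring
        _ = 1/(4*m^2) * u ^ (-(9:ℝ)/4) := by
            rw [hinv, hmul _ _ _ (by norm_num : -(5:ℝ)/4 + -(1:ℝ) = -(9:ℝ)/4)]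
    have e3 : (2 * cc u * (K0 * u ^ (-(1:ℝ)/2))) * (1/(m^3 * u ^ ((3:ℝ)/2)))
        = 2*K0/m^3 * u ^ (-(9:ℝ)/4) := by
      calc (2 * cc u * (K0 * u ^ (-(1:ℝ)/2))) * (1/(m^3 * u ^ ((3:ℝ)/2)))
          = 2*K0/m^3 * (u ^ (-(1:ℝ)/4) * u ^ (-(1:ℝ)/2) * (u ^ ((3:ℝ)/2))⁻¹) := by
            simp only [cc]; ring
        _ = 2*K0/m^3 * u ^ (-(9:ℝ)/4) := by
            rw [hinv, hmul _ _ _ (by norm_num : -(1:ℝ)/4 + -(1:ℝ)/2 = -(3:ℝ)/4),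
              hmul _ _ _ (by norm_num : -(3:ℝ)/4 + -((3:ℝ)/2) = -(9:ℝ)/4)]
    have h9 : u ^ (-(9:ℝ)/4) ≤ u ^ (-(5:ℝ)/4) := key _ _ (by norm_num)
    calc |bd d u| ≤ 1/(4*m^2) * u ^ (-(9:ℝ)/4) + 2*K0/m^3 * u ^ (-(9:ℝ)/4) := by
          rw [← e2, ← e3]; linarith
      _ ≤ (1/(4*m^2) + 2*K0/m^3) * u ^ (-(5:ℝ)/4) := by
          have c1 : (0:ℝ) ≤ 1/(4*m^2) := by positivity
          have c2 : (0:ℝ) ≤ 2*K0/m^3 := by positivity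
          nlinarith [h9]

lemma EE_norm (ξ u : ℝ) : ‖EE ξ u‖ = 1 := by
  rw [EE, Complex.norm_exp]
  have : ((-(Complex.I * ξ)) * (u:ℂ)).re = 0 := by simp [Complex.mul_re]
  rw [this, Real.exp_zero]

lemma EE_cont (ξ : ℝ) : Continuous (EE ξ) :=
  Complex.continuous_exp.comp (continuous_const.mul Complex.continuous_ofReal)

lemma EE_cont' (u : ℝ) : Continuous (fun ξ : ℝ => EE ξ u) := by
  apply Complex.continuous_exp.comp
  exact (continuous_const.mul Complex.continuous_ofReal).neg.mul continuous_const

lemma cont_parts (d x₀ : ℝ) (hx0 : 0 < x₀) (hne : ∀ u ≥ x₀, pp d u ≠ 0)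
    (Ψ : ℝ → ℝ) (hΨc : ContinuousOn Ψ (Set.Ici x₀)) (ξ : ℝ) :
    ContinuousOn (RR d Ψ ξ) (Set.Ici x₀) ∧ ContinuousOn (ff d Ψ ξ) (Set.Ici x₀) := by
  have hne0 : ∀ u ∈ Set.Ici x₀, u ≠ 0 := fun u hu => by
    exact ne_of_gt (lt_of_lt_of_le hx0 hu)
  have ccC : ContinuousOn cc (Set.Ici x₀) := fun u hu =>
    (Real.continuousAt_rpow_const u _ (Or.inl (hne0 u hu))).continuousWithinAt
  have cdC : ContinuousOn cd (Set.Ici x₀) := by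
    apply ContinuousOn.mul continuousOn_const
    exact fun u hu => (Real.continuousAt_rpow_const u _ (Or.inl (hne0 u hu))).continuousWithinAt
  have ppC : ContinuousOn (pp d) (Set.Ici x₀) := by
    apply ContinuousOn.sub
    · exact fun u hu => (Real.continuousAt_rpow_const u _ (Or.inl (hne0 u hu))).continuousWithinAt
    · exact continuousOn_const.div continuousOn_id hne0
  have pdC : ContinuousOn (pd d) (Set.Ici x₀) := by
    apply ContinuousOn.add
    · apply ContinuousOn.mul continuousOn_const
      exact fun u hu => (Real.continuousAt_rpow_const u _ (Or.inl (hne0 u hu))).continuousWithinAt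
    · exact continuousOn_const.div (continuousOn_pow 2) (fun u hu => pow_ne_zero 2 (hne0 u hu))
  have hne' : ∀ u ∈ Set.Ici x₀, pp d u ≠ 0 := fun u hu => hne u hu
  have aaC : ContinuousOn (aa d) (Set.Ici x₀) := ccC.div ppC hne'
  have bbC : ContinuousOn (bb d) (Set.Ici x₀) :=
    ccC.div (ppC.pow 2) (fun u hu => pow_ne_zero 2 (hne' u hu))
  have adC : ContinuousOn (ad d) (Set.Ici x₀) :=
    (cdC.div ppC hne').sub ((ccC.mul pdC).div (ppC.pow 2) (fun u hu => pow_ne_zero 2 (hne' u hu)))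
  have bdC : ContinuousOn (bd d) (Set.Ici x₀) :=
    (cdC.div (ppC.pow 2) (fun u hu => pow_ne_zero 2 (hne' u hu))).sub
      (((continuousOn_const.mul ccC).mul pdC).div (ppC.pow 3)
        (fun u hu => pow_ne_zero 3 (hne' u hu)))
  have sinC : ContinuousOn (fun u => Real.sin (Ψ u)) (Set.Ici x₀) :=
    Real.continuous_sin.comp_continuousOn hΨc
  have cosC : ContinuousOn (fun u => Real.cos (Ψ u)) (Set.Ici x₀) :=
    Real.continuous_cos.comp_continuousOn hΨc
  have EEc : ContinuousOn (EE ξ) (Set.Ici x₀) := (EE_cont ξ).continuousOn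
  have oR : ∀ {f : ℝ → ℝ}, ContinuousOn f (Set.Ici x₀) →
      ContinuousOn (fun u => ((f u : ℝ) : ℂ)) (Set.Ici x₀) := fun hf =>
    Complex.continuous_ofReal.comp_continuousOn hf
  constructor
  · unfold RR
    exact (((oR (sinC.mul adC)).mul EEc).sub
      ((continuousOn_const.mul (oR (cosC.mul bdC))).mul EEc)).sub
      ((continuousOn_const.mul (oR (cosC.mul bbC))).mul EEc)
  · unfold ff
    exact (oR (cosC.mul ccC)).mul EEc

lemma RR_norm_le (d m : ℝ) (Ψ : ℝ → ℝ) (ξ : ℝ) (hm0 : 0 < m) {u : ℝ} (hu1 : 1 < u)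
    (hp1 : m * u ^ ((1:ℝ)/2) ≤ pp d u) :
    ‖RR d Ψ ξ u‖ ≤ ((1/(4*m) + (1/2 + 3/4*d^2)/m^2)
        + |ξ| * (1/(4*m^2) + 2*(1/2 + 3/4*d^2)/m^3) + ξ^2 * (1/m^2)) * u ^ (-(5:ℝ)/4) := by
  obtain ⟨haa, hbb, had, hbd⟩ := pp_bounds d m hm0 hu1 hp1
  have ht : (0:ℝ) < u ^ (-(5:ℝ)/4) := Real.rpow_pos_of_pos (by linarith) _
  have h1 : ‖RR d Ψ ξ u‖ ≤ |Real.sin (Ψ u) * ad d u| + |ξ| * |Real.cos (Ψ u) * bd d u|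
      + ξ^2 * |Real.cos (Ψ u) * bb d u| := by
    unfold RR
    refine le_trans (norm_sub_le _ _) ?_
    gcongr ?_ + ?_
    · refine le_trans (norm_sub_le _ _) ?_
      gcongr ?_ + ?_
      · rw [norm_mul, EE_norm, mul_one, Complex.norm_real, Real.norm_eq_abs]
      · rw [norm_mul, EE_norm, mul_one, norm_mul, norm_mul, Complex.norm_I, one_mul,
          Complex.norm_real, Complex.norm_real, Real.norm_eq_abs, Real.norm_eq_abs]
    · rw [norm_mul, EE_norm, mul_one, norm_mul]
      have : ‖((ξ:ℂ))^2‖ = ξ^2 := by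
        rw [norm_pow, Complex.norm_real, Real.norm_eq_abs, sq_abs]
      rw [this, Complex.norm_real, Real.norm_eq_abs]
  have e1 : |Real.sin (Ψ u) * ad d u| ≤ (1/(4*m) + (1/2 + 3/4*d^2)/m^2) * u ^ (-(5:ℝ)/4) := by
    rw [abs_mul]
    refine le_trans (mul_le_of_le_one_left (abs_nonneg _) (Real.abs_sin_le_one _)) had
  have e2 : |Real.cos (Ψ u) * bd d u| ≤ (1/(4*m^2) + 2*(1/2 + 3/4*d^2)/m^3) * u ^ (-(5:ℝ)/4) := by
    rw [abs_mul]
    refine le_trans (mul_le_of_le_one_left (abs_nonneg _) (Real.abs_cos_le_one _)) hbd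
  have e3 : |Real.cos (Ψ u) * bb d u| ≤ 1/m^2 * u ^ (-(5:ℝ)/4) := by
    rw [abs_mul]
    refine le_trans (mul_le_of_le_one_left (abs_nonneg _) (Real.abs_cos_le_one _)) hbb
  have h2 := mul_le_mul_of_nonneg_left e2 (abs_nonneg ξ)
  have h3 := mul_le_mul_of_nonneg_left e3 (sq_nonneg ξ)
  nlinarith [h1, e1, h2, h3]

lemma HH_norm_le (d m : ℝ) (Ψ : ℝ → ℝ) (ξ : ℝ) (hm0 : 0 < m) {u : ℝ} (hu1 : 1 < u)
    (hp1 : m * u ^ ((1:ℝ)/2) ≤ pp d u) :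
    ‖HH d Ψ ξ u‖ ≤ 1/m * u ^ (-(3:ℝ)/4) + |ξ| * (1/m^2 * u ^ (-(5:ℝ)/4)) := by
  obtain ⟨haa, hbb, had, hbd⟩ := pp_bounds d m hm0 hu1 hp1
  have h1 : ‖HH d Ψ ξ u‖ ≤ |Real.sin (Ψ u) * aa d u| + |ξ| * |Real.cos (Ψ u) * bb d u| := by
    unfold HH
    refine le_trans (norm_sub_le _ _) ?_
    gcongr ?_ + ?_
    · rw [norm_mul, EE_norm, mul_one, Complex.norm_real, Real.norm_eq_abs]
    · rw [norm_mul, EE_norm, mul_one, norm_mul, norm_mul, Complex.norm_I, one_mul,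
        Complex.norm_real, Complex.norm_real, Real.norm_eq_abs, Real.norm_eq_abs]
  have e1 : |Real.sin (Ψ u) * aa d u| ≤ 1/m * u ^ (-(3:ℝ)/4) := by
    rw [abs_mul]
    refine le_trans (mul_le_of_le_one_left (abs_nonneg _) (Real.abs_sin_le_one _)) haa
  have e3 : |Real.cos (Ψ u) * bb d u| ≤ 1/m^2 * u ^ (-(5:ℝ)/4) := by
    rw [abs_mul]
    refine le_trans (mul_le_of_le_one_left (abs_nonneg _) (Real.abs_cos_le_one _)) hbb
  have h3 := mul_le_mul_of_nonneg_left e3 (abs_nonneg ξ)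
  linarith

set_option maxHeartbeats 1000000 in
/-- For the oscillatory function `g(x) = d(-x)^{-1/4} cos Ψ(-x)` supported on
`x < -x₀`, the principal value Fourier transform
`ĝ(ξ) = lim_{y→∞} ∫_{-y}^{-x₀} g(x) e^{iξx} dx` exists for all `ξ` and is
continuous at `ξ = 0`. -/
theorem oscillatory_fourier_continuous_at_zero (d φ x₀ : ℝ) (hx₀ : 1 < x₀)
    (Ψ : ℝ → ℝ)
    (hΨ : ∀ x : ℝ, Ψ x = (2/3) * x ^ ((3:ℝ)/2) - (3/4) * d^2 * Real.log x + φ)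
    (hΨ' : ∀ x ≥ x₀, x ^ ((1:ℝ)/2) - (3/4) * d^2 / x ≠ 0)
    (g : ℝ → ℝ)
    (hg : ∀ x : ℝ, g x = if x < -x₀ then d * (-x) ^ (-(1:ℝ)/4) * Real.cos (Ψ (-x)) else 0) :
    ∃ ghat : ℝ → ℂ,
      (∀ ξ : ℝ, Tendsto
        (fun y : ℝ => ∫ x in (-y)..(-x₀), (g x : ℂ) * Complex.exp (Complex.I * ξ * x))
        atTop (nhds (ghat ξ))) ∧
      Tendsto (fun ξ : ℝ => ghat ξ - ghat 0) (nhds 0) (nhds 0) := by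
  have hx0' : (0:ℝ) < x₀ := by linarith
  have hΨd : ∀ u : ℝ, 0 < u → HasDerivAt Ψ (pp d u) u := by
    intro u hu
    have hfun : Ψ = fun x => (2/3) * x ^ ((3:ℝ)/2) - (3/4) * d^2 * Real.log x + φ := funext hΨ
    rw [hfun]
    have h1 : HasDerivAt (fun x : ℝ => x ^ ((3:ℝ)/2)) ((3:ℝ)/2 * u ^ ((3:ℝ)/2 - 1)) u :=
      Real.hasDerivAt_rpow_const (Or.inl hu.ne')
    have h2 : HasDerivAt Real.log u⁻¹ u := Real.hasDerivAt_log hu.ne'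
    have h3 := ((h1.const_mul ((2:ℝ)/3)).sub (h2.const_mul ((3:ℝ)/4 * d^2))).add_const φ
    refine h3.congr_deriv ?_
    rw [show (3:ℝ)/2 - 1 = (1:ℝ)/2 by norm_num]
    unfold pp; field_simp
  have hne : ∀ u ≥ x₀, pp d u ≠ 0 := by
    intro u hu
    unfold pp
    exact hΨ' u hu
  obtain ⟨m, hm0, hm⟩ := pp_lower d x₀ hx₀ hne
  have hΨc : ContinuousOn Ψ (Set.Ici x₀) := fun u hu =>
    ((hΨd u (lt_of_lt_of_le hx0' hu)).continuousAt).continuousWithinAt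
  set K : ℝ := (1/(4*m) + (1/2 + 3/4*d^2)/m^2) + (1/(4*m^2) + 2*(1/2 + 3/4*d^2)/m^3)
    + (1/m^2) with hK
  have hRRmeas : ∀ ξ : ℝ, AEStronglyMeasurable (RR d Ψ ξ) (volume.restrict (Set.Ioi x₀)) :=
    fun ξ => ((cont_parts d x₀ hx0' hne Ψ hΨc ξ).1.mono Set.Ioi_subset_Ici_self).aestronglyMeasurable
      measurableSet_Ioi
  have hbase : IntegrableOn (fun u : ℝ => u ^ (-(5:ℝ)/4)) (Set.Ioi x₀) :=
    integrableOn_Ioi_rpow_of_lt (by norm_num) hx0'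
  have hRRint : ∀ ξ : ℝ, IntegrableOn (RR d Ψ ξ) (Set.Ioi x₀) := by
    intro ξ
    apply Integrable.mono'
      (g := fun u => ((1/(4*m) + (1/2 + 3/4*d^2)/m^2)
        + |ξ| * (1/(4*m^2) + 2*(1/2 + 3/4*d^2)/m^3) + ξ^2 * (1/m^2)) * u ^ (-(5:ℝ)/4))
      (hbase.const_mul _) (hRRmeas ξ)
    rw [ae_restrict_iff' measurableSet_Ioi]
    refine Filter.Eventually.of_forall (fun u hu => ?_)
    exact RR_norm_le d m Ψ ξ hm0 (lt_of_lt_of_le hx₀ (le_of_lt hu)) (hm u (le_of_lt hu))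
  refine ⟨fun ξ => (d:ℂ) * ((0 - HH d Ψ ξ x₀) - ∫ u in Set.Ioi x₀, RR d Ψ ξ u), ?_, ?_⟩
  · intro ξ
    have hid : ∀ y : ℝ, x₀ ≤ y →
        (∫ x in (-y)..(-x₀), (g x : ℂ) * Complex.exp (Complex.I * ξ * x))
          = (d:ℂ) * ((HH d Ψ ξ y - HH d Ψ ξ x₀) - ∫ u in x₀..y, RR d Ψ ξ u) := by
      intro y hy
      have huIcc : Set.uIcc x₀ y = Set.Icc x₀ y := Set.uIcc_of_le hy
      rw [← intervalIntegral.integral_comp_neg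
        (fun x => (g x : ℂ) * Complex.exp (Complex.I * ξ * x)) (a := x₀) (b := y)]
      have h2 : (∫ u in x₀..y, (g (-u) : ℂ) * Complex.exp (Complex.I * ξ * ((-u : ℝ) : ℂ)))
          = ∫ u in x₀..y, (d:ℂ) * ff d Ψ ξ u := by
        apply intervalIntegral.integral_congr_ae
        refine Filter.Eventually.of_forall (fun u hu => ?_)
        rw [Set.uIoc_of_le hy] at hu
        have hux : x₀ < u := hu.1
        rw [hg (-u), if_pos (by linarith : -u < -x₀), neg_neg]
        have harg : Complex.I * ξ * ((-u : ℝ) : ℂ) = -(Complex.I * ξ) * (u : ℂ) := by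
          push_cast; ring
        rw [harg]
        unfold ff EE cc
        push_cast
        ring
      rw [h2, intervalIntegral.integral_const_mul]
      have hderiv : ∀ u ∈ Set.uIcc x₀ y,
          HasDerivAt (HH d Ψ ξ) (ff d Ψ ξ u + RR d Ψ ξ u) u := by
        intro u hu
        rw [huIcc] at hu
        exact hasDerivAt_HH d Ψ ξ (lt_of_lt_of_le hx0' hu.1) (hne u hu.1)
          (hΨd u (lt_of_lt_of_le hx0' hu.1))
      have hffC : ContinuousOn (ff d Ψ ξ) (Set.uIcc x₀ y) := by
        rw [huIcc]
        exact (cont_parts d x₀ hx0' hne Ψ hΨc ξ).2.mono (fun z hz => hz.1)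
      have hRRC : ContinuousOn (RR d Ψ ξ) (Set.uIcc x₀ y) := by
        rw [huIcc]
        exact (cont_parts d x₀ hx0' hne Ψ hΨc ξ).1.mono (fun z hz => hz.1)
      have hffI : IntervalIntegrable (ff d Ψ ξ) volume x₀ y := hffC.intervalIntegrable
      have hRRI : IntervalIntegrable (RR d Ψ ξ) volume x₀ y := hRRC.intervalIntegrable
      have hftc := intervalIntegral.integral_eq_sub_of_hasDerivAt hderiv (hffI.add hRRI)
      rw [intervalIntegral.integral_add hffI hRRI] at hftc
      have : (∫ u in x₀..y, ff d Ψ ξ u)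
          = (HH d Ψ ξ y - HH d Ψ ξ x₀) - ∫ u in x₀..y, RR d Ψ ξ u := by
        rw [← hftc]; ring
      rw [this]
    have hev : (fun y : ℝ => (d:ℂ) * ((HH d Ψ ξ y - HH d Ψ ξ x₀) - ∫ u in x₀..y, RR d Ψ ξ u))
        =ᶠ[atTop] (fun y : ℝ => ∫ x in (-y)..(-x₀), (g x : ℂ) * Complex.exp (Complex.I * ξ * x)) := by
      filter_upwards [eventually_ge_atTop x₀] with y hy using (hid y hy).symm
    refine Tendsto.congr' hev ?_
    have t1 : Tendsto (fun y : ℝ => y ^ (-(3:ℝ)/4)) atTop (nhds 0) := by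
      rw [show -(3:ℝ)/4 = -((3:ℝ)/4) by norm_num]
      exact tendsto_rpow_neg_atTop (by norm_num)
    have t2 : Tendsto (fun y : ℝ => y ^ (-(5:ℝ)/4)) atTop (nhds 0) := by
      rw [show -(5:ℝ)/4 = -((5:ℝ)/4) by norm_num]
      exact tendsto_rpow_neg_atTop (by norm_num)
    have hHH0 : Tendsto (fun y => HH d Ψ ξ y) atTop (nhds 0) := by
      apply squeeze_zero_norm'
        (a := fun y : ℝ => 1/m * y ^ (-(3:ℝ)/4) + |ξ| * (1/m^2 * y ^ (-(5:ℝ)/4)))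
      · filter_upwards [eventually_ge_atTop x₀] with y hy using
          HH_norm_le d m Ψ ξ hm0 (lt_of_lt_of_le hx₀ hy) (hm y hy)
      · have := (t1.const_mul (1/m)).add ((t2.const_mul (1/m^2)).const_mul |ξ|)
        simpa using this
    have hIcv : Tendsto (fun y => ∫ u in x₀..y, RR d Ψ ξ u) atTop
        (nhds (∫ u in Set.Ioi x₀, RR d Ψ ξ u)) :=
      intervalIntegral_tendsto_integral_Ioi x₀ (hRRint ξ) tendsto_id
    exact ((hHH0.sub tendsto_const_nhds).sub hIcv).const_mul ((d:ℂ))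
  · have hcont1 : Continuous (fun ξ : ℝ => HH d Ψ ξ x₀) := by
      unfold HH
      exact (continuous_const.mul (EE_cont' x₀)).sub
        (((continuous_const.mul Complex.continuous_ofReal).mul continuous_const).mul (EE_cont' x₀))
    have hint_cont : Tendsto (fun ξ : ℝ => ∫ u in Set.Ioi x₀, RR d Ψ ξ u) (nhds 0)
        (nhds (∫ u in Set.Ioi x₀, RR d Ψ 0 u)) := by
      apply MeasureTheory.tendsto_integral_filter_of_dominated_convergence
        (bound := fun u => K * u ^ (-(5:ℝ)/4))
      · exact Filter.Eventually.of_forall hRRmeas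
      · have hsmall : ∀ᶠ ξ : ℝ in nhds 0, |ξ| ≤ 1 := by
          filter_upwards [Icc_mem_nhds (by norm_num : (-1:ℝ) < 0) (by norm_num : (0:ℝ) < 1)]
            with ξ hξ
          exact abs_le.mpr ⟨hξ.1, hξ.2⟩
        filter_upwards [hsmall] with ξ hξ
        rw [ae_restrict_iff' measurableSet_Ioi]
        refine Filter.Eventually.of_forall (fun u hu => ?_)
        refine le_trans (RR_norm_le d m Ψ ξ hm0 (lt_of_lt_of_le hx₀ (le_of_lt hu))
          (hm u (le_of_lt hu))) ?_
        have hrp : (0:ℝ) ≤ u ^ (-(5:ℝ)/4) :=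
          (Real.rpow_pos_of_pos (by linarith [hu.out] : (0:ℝ) < u) _).le
        apply mul_le_mul_of_nonneg_right _ hrp
        have h1 : ξ^2 ≤ 1 := by nlinarith [abs_nonneg ξ, sq_abs ξ]
        have c2 : (0:ℝ) ≤ 1/(4*m^2) + 2*(1/2 + 3/4*d^2)/m^3 := by positivity
        have c3 : (0:ℝ) ≤ 1/m^2 := by positivity
        rw [hK]
        nlinarith [abs_nonneg ξ]
      · exact hbase.const_mul K
      · refine Filter.Eventually.of_forall (fun u => ?_)
        have hcRR : Continuous (fun ξ : ℝ => RR d Ψ ξ u) := by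
          unfold RR
          exact ((continuous_const.mul (EE_cont' u)).sub
            (((continuous_const.mul Complex.continuous_ofReal).mul continuous_const).mul
              (EE_cont' u))).sub
            ((((Complex.continuous_ofReal.pow 2)).mul continuous_const).mul (EE_cont' u))
        exact hcRR.tendsto 0
    have hfinal : Tendsto
        (fun ξ : ℝ => (d:ℂ) * ((0 - HH d Ψ ξ x₀) - ∫ u in Set.Ioi x₀, RR d Ψ ξ u)) (nhds 0)
        (nhds ((d:ℂ) * ((0 - HH d Ψ 0 x₀) - ∫ u in Set.Ioi x₀, RR d Ψ 0 u))) :=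
      ((tendsto_const_nhds.sub (hcont1.tendsto 0)).sub hint_cont).const_mul _
    have := hfinal.sub (tendsto_const_nhds
      (x := (d:ℂ) * ((0 - HH d Ψ 0 x₀) - ∫ u in Set.Ioi x₀, RR d Ψ 0 u)) (f := nhds (0:ℝ)))
    simpa using this
end

section
/- Let Ψ(x) := (2/3)x^{3/2} - (3/4)d² ln x + φ with Ψ'(x) = x^{1/2} - (3/4)d²/x ≠ 0 for x ≥ x₀ > 1, and g(x) := d·(-x)^{-1/4} cos Ψ(-x)·χ_{(-∞,-x₀)}(x). Then for every Schwartz function φ ∈ 𝒮(ℝ) and every z ≥ x₀, lim_{t→0^+} ∫_{-∞}^{-z} g(x) φ(x t^{1/3}) dx = O(z^{-3/4}) as z → ∞; i.e., there exists C > 0 independent of z such that the limit exists and its absolute value is ≤ C z^{-3/4}. -/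
open Filter Real MeasureTheory
open Set Topology

/-!
After substituting `x = -u` and `s = t^{1/3}` the integral becomes `∫_z^∞ cos Ψ(u) a_s(u) du`
with amplitude `a_s(u) = d u^{-1/4} φ(-us)`. The phase is non-stationary: `Ψ'(u) ≥ c √u` on
`[x₀, ∞)`. Writing `cos Ψ = (sin Ψ)' / Ψ'` and integrating by parts leaves the boundary term
`-sin Ψ(z) a_s(z) / Ψ'(z) = O(z^{-3/4})` and the integral of `sin Ψ · (a_s / Ψ')'`, whose
integrand is `O(u^{-7/4})` uniformly in `s ≥ 0` because `x φ'(x)` is bounded. Dominated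
convergence then lets `s → 0⁺`, and integrating `u^{-7/4}` over `(z, ∞)` bounds the limit by
`O(z^{-3/4})`.
-/

theorem abs_sin_mul_le {x y b : ℝ} (h : |y| ≤ b) : |sin x * y| ≤ b := by
  rw [abs_mul]
  exact (mul_le_of_le_one_left (abs_nonneg y) (abs_sin_le_one x)).trans h

theorem abs_cos_mul_le {x y b : ℝ} (h : |y| ≤ b) : |cos x * y| ≤ b := by
  rw [abs_mul]
  exact (mul_le_of_le_one_left (abs_nonneg y) (abs_cos_le_one x)).trans h

theorem abs_div_le_of_mul_rpow_le {a p u α c r : ℝ} (hu : 0 < u) (hc : 0 < c)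
    (hp : c * u ^ ((1:ℝ)/2) ≤ p) (ha : |a| ≤ α * u ^ r) :
    |a / p| ≤ α / c * u ^ (r - 1/2) := by
  have hcu : 0 < c * u ^ ((1:ℝ)/2) := by positivity
  have hα : 0 ≤ α := nonneg_of_mul_nonneg_left ((abs_nonneg a).trans ha) (by positivity)
  rw [abs_div, abs_of_pos (hcu.trans_le hp), div_le_iff₀ (hcu.trans_le hp)]
  calc |a| ≤ α / c * u ^ (r - 1/2) * (c * u ^ ((1:ℝ)/2)) := by
        rwa [mul_mul_mul_comm, div_mul_cancel₀ _ hc.ne', ← rpow_add hu, sub_add_cancel]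
    _ ≤ α / c * u ^ (r - 1/2) * p := by gcongr

theorem abs_quotient_deriv_le {a a' p p' u α β γ c : ℝ} (hu : 0 < u) (hc : 0 < c)
    (hp : c * u ^ ((1:ℝ)/2) ≤ p) (ha : |a| ≤ α * u ^ (-(1:ℝ)/4))
    (ha' : |a'| ≤ β * u ^ (-(5:ℝ)/4)) (hp' : |p'| ≤ γ * u ^ (-(1:ℝ)/2)) :
    |(a' * p - a * p') / p ^ 2| ≤ (β / c + α * γ / c ^ 2) * u ^ (-(7:ℝ)/4) := by
  have hp0 : 0 < p := (by positivity : 0 < c * u ^ ((1:ℝ)/2)).trans_le hp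
  have hα : 0 ≤ α := nonneg_of_mul_nonneg_left ((abs_nonneg a).trans ha) (by positivity)
  have hap' : |a * p'| ≤ α * γ * u ^ (-(1:ℝ)/4 + -(1:ℝ)/2) := by
    rw [abs_mul, rpow_add hu]
    calc |a| * |p'| ≤ α * u ^ (-(1:ℝ)/4) * (γ * u ^ (-(1:ℝ)/2)) :=
          mul_le_mul ha hp' (abs_nonneg _) (by positivity)
      _ = _ := by ring
  have h1 := abs_div_le_of_mul_rpow_le hu hc hp ha'
  have h2 := abs_div_le_of_mul_rpow_le hu hc hp (abs_div_le_of_mul_rpow_le hu hc hp hap')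
  calc |(a' * p - a * p') / p ^ 2| = |a' / p - a * p' / p / p| := by
        congr 1; field_simp
    _ ≤ |a' / p| + |a * p' / p / p| := abs_sub _ _
    _ ≤ β / c * u ^ (-(5:ℝ)/4 - 1/2) +
          α * γ / c / c * u ^ (-(1:ℝ)/4 + -(1:ℝ)/2 - 1/2 - 1/2) := add_le_add h1 h2
    _ = _ := by norm_num; ring

theorem integrableOn_Ioi_of_abs_le_rpow {f : ℝ → ℝ} {z K r : ℝ} (hz : 0 < z) (hr : r < -1)
    (hf : AEStronglyMeasurable f (volume.restrict (Ioi z))) (hfK : ∀ u > z, |f u| ≤ K * u ^ r) :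
    IntegrableOn f (Ioi z) :=
  ((integrableOn_Ioi_rpow_of_lt hr hz).const_mul K).mono' hf
    ((ae_restrict_iff' measurableSet_Ioi).2 (ae_of_all _ hfK))

theorem integral_Ioi_cos_mul_eq_of_hasDerivAt {Ψ P P' a a' : ℝ → ℝ} {z : ℝ}
    (hΨ : ∀ u ∈ Ici z, HasDerivAt Ψ (P u) u) (hP : ∀ u ∈ Ici z, HasDerivAt P (P' u) u)
    (ha : ∀ u ∈ Ici z, HasDerivAt a (a' u) u) (hP0 : ∀ u ∈ Ici z, P u ≠ 0)
    (hint : IntegrableOn (fun u => cos (Ψ u) * a u) (Ioi z))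
    (hint' : IntegrableOn (fun u => sin (Ψ u) * ((a' u * P u - a u * P' u) / P u ^ 2)) (Ioi z))
    (hlim : Tendsto (fun u => a u / P u) atTop (𝓝 0)) :
    ∫ u in Ioi z, cos (Ψ u) * a u =
      -(sin (Ψ z) * (a z / P z)) -
        ∫ u in Ioi z, sin (Ψ u) * ((a' u * P u - a u * P' u) / P u ^ 2) := by
  have hderiv : ∀ u ∈ Ici z, HasDerivAt (fun v => sin (Ψ v) * (a v / P v))
      (cos (Ψ u) * a u + sin (Ψ u) * ((a' u * P u - a u * P' u) / P u ^ 2)) u := by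
    intro u hu
    refine (((hΨ u hu).sin).mul ((ha u hu).div (hP u hu) (hP0 u hu))).congr_deriv ?_
    simp only [Pi.div_apply]
    field_simp [hP0 u hu]
  have hbdry : Tendsto (fun v => sin (Ψ v) * (a v / P v)) atTop (𝓝 0) := by
    refine squeeze_zero_norm (fun v => ?_) (tendsto_zero_iff_norm_tendsto_zero.1 hlim)
    rw [norm_mul]
    exact mul_le_of_le_one_left (norm_nonneg _) (by simpa using abs_sin_le_one (Ψ v))
  have h := integral_Ioi_of_hasDerivAt_of_tendsto
    (hderiv z self_mem_Ici).continuousAt.continuousWithinAt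
    (fun u hu => hderiv u (Ioi_subset_Ici_self hu)) (hint.add hint') hbdry
  rw [integral_add hint hint'] at h
  linarith

theorem tendsto_rpow_nhdsGT_zero {r : ℝ} (hr : 0 < r) :
    Tendsto (fun t : ℝ => t ^ r) (𝓝[>] 0) (𝓝[>] 0) := by
  refine tendsto_nhdsWithin_iff.2
    ⟨?_, eventually_nhdsWithin_of_forall fun t ht => rpow_pos_of_pos ht r⟩
  simpa [zero_rpow hr.ne'] using
    ((continuousAt_rpow_const 0 r (Or.inr hr.le)).tendsto).mono_left nhdsWithin_le_nhds

theorem SchwartzMap.abs_le_seminorm (φ : SchwartzMap ℝ ℝ) (x : ℝ) :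
    |φ x| ≤ SchwartzMap.seminorm ℝ 0 0 φ :=
  φ.norm_le_seminorm ℝ x

theorem SchwartzMap.abs_mul_abs_le_seminorm (φ : SchwartzMap ℝ ℝ) (x : ℝ) :
    |x| * |φ x| ≤ SchwartzMap.seminorm ℝ 1 0 φ := by
  simpa using φ.norm_pow_mul_le_seminorm ℝ 1 x

noncomputable def phaseDeriv (k u : ℝ) : ℝ := u ^ ((1:ℝ)/2) - k / u

noncomputable def phaseDeriv2 (k u : ℝ) : ℝ := 2⁻¹ * u ^ (-(1:ℝ)/2) + k / u ^ 2

theorem hasDerivAt_phase {k φ₀ u : ℝ} {Ψ : ℝ → ℝ}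
    (hΨ : ∀ x, Ψ x = 2/3 * x ^ ((3:ℝ)/2) - k * log x + φ₀) (hu : 0 < u) :
    HasDerivAt Ψ (phaseDeriv k u) u := by
  rw [funext hΨ]
  refine ((((hasDerivAt_rpow_const (p := (3:ℝ)/2) (Or.inl hu.ne')).const_mul (2/3)).sub
    ((hasDerivAt_log hu.ne').const_mul k)).add_const φ₀).congr_deriv ?_
  rw [phaseDeriv]
  norm_num
  ring

theorem hasDerivAt_phaseDeriv (k : ℝ) {u : ℝ} (hu : 0 < u) :
    HasDerivAt (phaseDeriv k) (phaseDeriv2 k u) u := by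
  have h := (hasDerivAt_rpow_const (p := (1:ℝ)/2) (Or.inl hu.ne')).sub
    ((hasDerivAt_inv hu.ne').const_mul k)
  refine (h.congr_deriv ?_).congr_of_eventuallyEq (.of_forall fun x => ?_)
  · rw [phaseDeriv2]; norm_num; ring
  · simp [phaseDeriv, div_eq_mul_inv]

theorem abs_phaseDeriv2_le {k u : ℝ} (hk : 0 ≤ k) (hu : 1 ≤ u) :
    |phaseDeriv2 k u| ≤ (1/2 + k) * u ^ (-(1:ℝ)/2) := by
  have hu0 : 0 < u := by linarith
  have hk' : k / u ^ 2 ≤ k * u ^ (-(1:ℝ)/2) := by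
    rw [div_eq_mul_inv, ← rpow_natCast, ← rpow_neg hu0.le]
    exact mul_le_mul_of_nonneg_left (rpow_le_rpow_of_exponent_le hu (by norm_num)) hk
  rw [abs_of_nonneg (by unfold phaseDeriv2; positivity), phaseDeriv2]
  linarith

theorem one_sub_div_rpow_pos_of_phaseDeriv_ne_zero {k x₀ : ℝ} (hx₀ : 0 < x₀)
    (hP : ∀ x ≥ x₀, phaseDeriv k x ≠ 0) : 0 < 1 - k / x₀ ^ ((3:ℝ)/2) := by
  by_contra! hc
  have hx₀k : x₀ ^ ((3:ℝ)/2) ≤ k := by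
    rwa [sub_nonpos, one_le_div (by positivity)] at hc
  have hk : 0 < k := (by positivity : (0:ℝ) < x₀ ^ ((3:ℝ)/2)).trans_le hx₀k
  -- `Ψ'` vanishes at `k ^ (2/3)`, which lies beyond `x₀`
  refine hP (k ^ ((2:ℝ)/3)) ?_ ?_
  · calc x₀ = (x₀ ^ ((3:ℝ)/2)) ^ ((2:ℝ)/3) := by rw [← rpow_mul hx₀.le]; norm_num
      _ ≤ k ^ ((2:ℝ)/3) := by gcongr
  · rw [phaseDeriv, ← rpow_mul hk.le, sub_eq_zero, eq_div_iff (by positivity), ← rpow_add hk]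
    norm_num

theorem mul_rpow_le_phaseDeriv {k x₀ u : ℝ} (hk : 0 ≤ k) (hx₀ : 0 < x₀) (hu : x₀ ≤ u) :
    (1 - k / x₀ ^ ((3:ℝ)/2)) * u ^ ((1:ℝ)/2) ≤ phaseDeriv k u := by
  have hu0 : 0 < u := hx₀.trans_le hu
  have h32 : x₀ ^ ((3:ℝ)/2) ≤ u ^ ((1:ℝ)/2) * u := by
    calc x₀ ^ ((3:ℝ)/2) ≤ u ^ ((3:ℝ)/2) := by gcongr
      _ = u ^ ((1:ℝ)/2) * u := by rw [← rpow_add_one hu0.ne']; norm_num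
  have hk' : k / u ≤ k / x₀ ^ ((3:ℝ)/2) * u ^ ((1:ℝ)/2) := by
    rw [div_mul_eq_mul_div, div_le_div_iff₀ hu0 (by positivity), mul_assoc]
    exact mul_le_mul_of_nonneg_left h32 hk
  rw [phaseDeriv]
  linarith

theorem exists_mul_rpow_le_phaseDeriv {k x₀ : ℝ} (hk : 0 ≤ k) (hx₀ : 0 < x₀)
    (hP : ∀ x ≥ x₀, phaseDeriv k x ≠ 0) :
    ∃ c > 0, ∀ u ≥ x₀, c * u ^ ((1:ℝ)/2) ≤ phaseDeriv k u :=
  ⟨_, one_sub_div_rpow_pos_of_phaseDeriv_ne_zero hx₀ hP,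
    fun _ hu => mul_rpow_le_phaseDeriv hk hx₀ hu⟩

/-- The integrand `g(-u) φ(-u s)` on `u > x₀` is `cos Ψ(u) * amplitude d φ s u`. -/
noncomputable def amplitude (d : ℝ) (φ : ℝ → ℝ) (s u : ℝ) : ℝ :=
  d * u ^ (-(1:ℝ)/4) * φ (-u * s)

noncomputable def amplitudeDeriv (d : ℝ) (φ : ℝ → ℝ) (s u : ℝ) : ℝ :=
  d * (-(1:ℝ)/4 * u ^ (-(5:ℝ)/4) * φ (-u * s) - s * u ^ (-(1:ℝ)/4) * deriv φ (-u * s))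

theorem hasDerivAt_amplitude {φ : ℝ → ℝ} (hφ : Differentiable ℝ φ) (d s : ℝ) {u : ℝ}
    (hu : 0 < u) :
    HasDerivAt (amplitude d φ s) (amplitudeDeriv d φ s u) u := by
  have hφs : HasDerivAt (fun v => φ (-v * s)) (deriv φ (-u * s) * -s) u :=
    (hφ _).hasDerivAt.comp u (by simpa using ((hasDerivAt_id u).neg.mul_const s))
  refine (((hasDerivAt_rpow_const (Or.inl hu.ne')).const_mul d).mul hφs).congr_deriv ?_
  rw [amplitudeDeriv]
  norm_num
  ring

theorem abs_amplitude_le {d S s u : ℝ} {φ : ℝ → ℝ} (hφ : ∀ x, |φ x| ≤ S) (hu : 0 < u) :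
    |amplitude d φ s u| ≤ |d| * S * u ^ (-(1:ℝ)/4) := by
  rw [amplitude, abs_mul, abs_mul, abs_of_pos (rpow_pos_of_pos hu _)]
  calc |d| * u ^ (-(1:ℝ)/4) * |φ (-u * s)| ≤ |d| * u ^ (-(1:ℝ)/4) * S := by gcongr; exact hφ _
    _ = |d| * S * u ^ (-(1:ℝ)/4) := by ring

theorem abs_amplitude_le_of_pos {d S s u : ℝ} {φ : ℝ → ℝ} (hφ : ∀ x, |x| * |φ x| ≤ S)
    (hs : 0 < s) (hu : 0 < u) :
    |amplitude d φ s u| ≤ |d| * S / s * u ^ (-(5:ℝ)/4) := by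
  have hφus : |φ (-u * s)| ≤ S / (u * s) := by
    rw [le_div_iff₀ (by positivity), mul_comm]
    simpa [abs_mul, abs_of_pos hu, abs_of_pos hs] using hφ (-u * s)
  have h54 : u ^ (-(5:ℝ)/4) = u ^ (-(1:ℝ)/4) / u := by
    rw [← rpow_sub_one hu.ne']; norm_num
  rw [amplitude, abs_mul, abs_mul, abs_of_pos (rpow_pos_of_pos hu _), h54]
  calc |d| * u ^ (-(1:ℝ)/4) * |φ (-u * s)|
      ≤ |d| * u ^ (-(1:ℝ)/4) * (S / (u * s)) := by gcongr
    _ = |d| * S / s * (u ^ (-(1:ℝ)/4) / u) := by field_simp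

theorem abs_amplitudeDeriv_le {d S₀ S₁ s u : ℝ} {φ : ℝ → ℝ} (hφ : ∀ x, |φ x| ≤ S₀)
    (hφ' : ∀ x, |x| * |deriv φ x| ≤ S₁) (hs : 0 ≤ s) (hu : 0 < u) :
    |amplitudeDeriv d φ s u| ≤ |d| * (S₀ / 4 + S₁) * u ^ (-(5:ℝ)/4) := by
  -- the factor `s` produced by the chain rule is absorbed by the decay of `x φ'(x)`
  have hφ'us : s * |deriv φ (-u * s)| ≤ S₁ / u := by
    rw [le_div_iff₀ hu]
    calc s * |deriv φ (-u * s)| * u = |-u * s| * |deriv φ (-u * s)| := by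
          rw [abs_mul, abs_neg, abs_of_pos hu, abs_of_nonneg hs]; ring
      _ ≤ S₁ := hφ' _
  have h54 : u ^ (-(5:ℝ)/4) = u ^ (-(1:ℝ)/4) / u := by
    rw [← rpow_sub_one hu.ne']; norm_num
  have h14 := rpow_pos_of_pos hu (-(1:ℝ)/4)
  have h54' := rpow_pos_of_pos hu (-(5:ℝ)/4)
  rw [amplitudeDeriv, abs_mul, mul_assoc |d|]
  refine mul_le_mul_of_nonneg_left ?_ (abs_nonneg d)
  calc |-(1:ℝ)/4 * u ^ (-(5:ℝ)/4) * φ (-u * s) - s * u ^ (-(1:ℝ)/4) * deriv φ (-u * s)|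
      ≤ 1/4 * u ^ (-(5:ℝ)/4) * |φ (-u * s)| + u ^ (-(1:ℝ)/4) * (s * |deriv φ (-u * s)|) := by
        refine (abs_sub _ _).trans_eq ?_
        simp only [abs_mul, abs_of_pos h14, abs_of_pos h54', abs_of_nonneg hs]
        norm_num; ring
    _ ≤ 1/4 * u ^ (-(5:ℝ)/4) * S₀ + u ^ (-(1:ℝ)/4) * (S₁ / u) := by gcongr; exact hφ _
    _ = (S₀ / 4 + S₁) * u ^ (-(5:ℝ)/4) := by rw [h54]; ring

noncomputable def amplitudeQuotDeriv (d k : ℝ) (φ : ℝ → ℝ) (s u : ℝ) : ℝ :=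
  (amplitudeDeriv d φ s u * phaseDeriv k u - amplitude d φ s u * phaseDeriv2 k u) /
    phaseDeriv k u ^ 2

/-- The limit, in integrated-by-parts form: at `s = 0` the integral of `cos Ψ · a₀` converges
only conditionally. -/
noncomputable def tailLimit (d k : ℝ) (Ψ φ : ℝ → ℝ) (z : ℝ) : ℝ :=
  -(sin (Ψ z) * (amplitude d φ 0 z / phaseDeriv k z)) -
    ∫ u in Ioi z, sin (Ψ u) * amplitudeQuotDeriv d k φ 0 u

theorem exists_abs_amplitudeQuotDeriv_le (d : ℝ) (φ : SchwartzMap ℝ ℝ) {k c x₀ : ℝ}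
    (hk : 0 ≤ k) (hc : 0 < c) (hx₀ : 1 ≤ x₀) (hP : ∀ u ≥ x₀, c * u ^ ((1:ℝ)/2) ≤ phaseDeriv k u) :
    ∃ K, ∀ s ≥ 0, ∀ u ≥ x₀, |amplitudeQuotDeriv d k φ s u| ≤ K * u ^ (-(7:ℝ)/4) :=
  ⟨_, fun s hs u hu => abs_quotient_deriv_le (by linarith) hc (hP u hu)
    (abs_amplitude_le φ.abs_le_seminorm (by linarith))
    (abs_amplitudeDeriv_le φ.abs_le_seminorm
      (SchwartzMap.derivCLM ℝ ℝ φ).abs_mul_abs_le_seminorm hs (by linarith))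
    (abs_phaseDeriv2_le hk (hx₀.trans hu))⟩

theorem integrableOn_sin_mul_amplitudeQuotDeriv {d k z K s : ℝ} {Ψ φ : ℝ → ℝ}
    (hΨ : Measurable Ψ) (hφ : Continuous φ) (hz : 0 < z)
    (hK : ∀ u > z, |amplitudeQuotDeriv d k φ s u| ≤ K * u ^ (-(7:ℝ)/4)) :
    IntegrableOn (fun u => sin (Ψ u) * amplitudeQuotDeriv d k φ s u) (Ioi z) := by
  have hφ' := measurable_deriv φ
  refine integrableOn_Ioi_of_abs_le_rpow hz (by norm_num) (Measurable.aestronglyMeasurable ?_)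
    fun u hu => abs_sin_mul_le (hK u hu)
  unfold amplitudeQuotDeriv amplitudeDeriv amplitude phaseDeriv phaseDeriv2
  fun_prop

theorem abs_amplitude_div_phaseDeriv_le {d k c s u : ℝ} (φ : SchwartzMap ℝ ℝ) (hc : 0 < c)
    (hu : 0 < u) (hP : c * u ^ ((1:ℝ)/2) ≤ phaseDeriv k u) :
    |amplitude d φ s u / phaseDeriv k u| ≤
      |d| * SchwartzMap.seminorm ℝ 0 0 φ / c * u ^ (-(3:ℝ)/4) := by
  convert abs_div_le_of_mul_rpow_le hu hc hP (abs_amplitude_le φ.abs_le_seminorm hu) using 3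
  norm_num

theorem integral_cos_mul_amplitude_eq {d k c z K s : ℝ} {Ψ : ℝ → ℝ} (φ : SchwartzMap ℝ ℝ)
    (hΨd : ∀ u > 0, HasDerivAt Ψ (phaseDeriv k u) u) (hΨm : Measurable Ψ) (hc : 0 < c)
    (hz : 0 < z) (hP : ∀ u ≥ z, c * u ^ ((1:ℝ)/2) ≤ phaseDeriv k u)
    (hK : ∀ u > z, |amplitudeQuotDeriv d k φ s u| ≤ K * u ^ (-(7:ℝ)/4)) (hs : 0 < s) :
    ∫ u in Ioi z, cos (Ψ u) * amplitude d φ s u =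
      -(sin (Ψ z) * (amplitude d φ s z / phaseDeriv k z)) -
        ∫ u in Ioi z, sin (Ψ u) * amplitudeQuotDeriv d k φ s u := by
  have hcos : IntegrableOn (fun u => cos (Ψ u) * amplitude d φ s u) (Ioi z) := by
    refine integrableOn_Ioi_of_abs_le_rpow hz (by norm_num) (Measurable.aestronglyMeasurable ?_)
      fun u hu => abs_cos_mul_le
        (abs_amplitude_le_of_pos φ.abs_mul_abs_le_seminorm hs (hz.trans hu))
    unfold amplitude
    fun_prop
  have hlim : Tendsto (fun u => amplitude d φ s u / phaseDeriv k u) atTop (𝓝 0) := by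
    have hdecay := (tendsto_rpow_neg_atTop (by norm_num : (0:ℝ) < 3/4)).const_mul
      (|d| * SchwartzMap.seminorm ℝ 0 0 φ / c)
    rw [mul_zero] at hdecay
    refine squeeze_zero_norm' ?_ hdecay
    filter_upwards [eventually_ge_atTop z] with u hu
    rw [norm_eq_abs, ← neg_div]
    exact abs_amplitude_div_phaseDeriv_le φ hc (hz.trans_le hu) (hP u hu)
  have hP0 : ∀ u ∈ Ici z, phaseDeriv k u ≠ 0 := fun u hu =>
    ((mul_pos hc (rpow_pos_of_pos (hz.trans_le hu) _)).trans_le (hP u hu)).ne'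
  exact integral_Ioi_cos_mul_eq_of_hasDerivAt (fun u hu => hΨd u (hz.trans_le hu))
    (fun u hu => hasDerivAt_phaseDeriv k (hz.trans_le hu))
    (fun u hu => hasDerivAt_amplitude φ.differentiable d s (hz.trans_le hu)) hP0
    hcos (integrableOn_sin_mul_amplitudeQuotDeriv hΨm φ.continuous hz hK) hlim

theorem tendsto_integral_cos_mul_amplitude {d k c z K : ℝ} {Ψ : ℝ → ℝ} (φ : SchwartzMap ℝ ℝ)
    (hΨd : ∀ u > 0, HasDerivAt Ψ (phaseDeriv k u) u) (hΨm : Measurable Ψ) (hc : 0 < c)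
    (hz : 0 < z) (hP : ∀ u ≥ z, c * u ^ ((1:ℝ)/2) ≤ phaseDeriv k u)
    (hK : ∀ s ≥ 0, ∀ u > z, |amplitudeQuotDeriv d k φ s u| ≤ K * u ^ (-(7:ℝ)/4)) :
    Tendsto (fun s => ∫ u in Ioi z, cos (Ψ u) * amplitude d φ s u) (𝓝[>] 0)
      (𝓝 (tailLimit d k Ψ φ z)) := by
  have hφ' : Continuous (deriv φ) := (SchwartzMap.derivCLM ℝ ℝ φ).continuous
  have hbdry : Continuous fun s => sin (Ψ z) * (amplitude d φ s z / phaseDeriv k z) := by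
    unfold amplitude
    fun_prop
  have hs : ∀ᶠ s in 𝓝[>] (0:ℝ), 0 ≤ s := eventually_nhdsWithin_of_forall fun s hs => le_of_lt hs
  have hint : Tendsto (fun s => ∫ u in Ioi z, sin (Ψ u) * amplitudeQuotDeriv d k φ s u) (𝓝[>] 0)
      (𝓝 (∫ u in Ioi z, sin (Ψ u) * amplitudeQuotDeriv d k φ 0 u)) := by
    refine tendsto_integral_filter_of_dominated_convergence (fun u => K * u ^ (-(7:ℝ)/4))
      (hs.mono fun s hs => (integrableOn_sin_mul_amplitudeQuotDeriv hΨm φ.continuous hz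
        (hK s hs)).aestronglyMeasurable)
      (hs.mono fun s hs => (ae_restrict_iff' measurableSet_Ioi).2 (.of_forall fun u hu =>
        abs_sin_mul_le (hK s hs u hu)))
      ((integrableOn_Ioi_rpow_of_lt (by norm_num) hz).const_mul K)
      (.of_forall fun u => ?_)
    refine ((Continuous.tendsto ?_ 0).mono_left nhdsWithin_le_nhds)
    unfold amplitudeQuotDeriv amplitudeDeriv amplitude
    fun_prop
  refine (((hbdry.tendsto 0).mono_left nhdsWithin_le_nhds).neg.sub hint).congr' ?_
  filter_upwards [self_mem_nhdsWithin] with s hs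
  exact (integral_cos_mul_amplitude_eq φ hΨd hΨm hc hz hP (hK s (le_of_lt hs)) hs).symm

theorem exists_abs_tailLimit_le {d k c x₀ K : ℝ} (Ψ : ℝ → ℝ) (φ : SchwartzMap ℝ ℝ)
    (hc : 0 < c) (hx₀ : 0 < x₀) (hP : ∀ u ≥ x₀, c * u ^ ((1:ℝ)/2) ≤ phaseDeriv k u)
    (hK : ∀ u ≥ x₀, |amplitudeQuotDeriv d k φ 0 u| ≤ K * u ^ (-(7:ℝ)/4)) :
    ∃ C > 0, ∀ z ≥ x₀, |tailLimit d k Ψ φ z| ≤ C * z ^ (-(3:ℝ)/4) := by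
  have hK0 : 0 ≤ K :=
    nonneg_of_mul_nonneg_left ((abs_nonneg _).trans (hK x₀ le_rfl)) (by positivity)
  have hS : 0 ≤ SchwartzMap.seminorm ℝ 0 0 φ := apply_nonneg _ _
  refine ⟨|d| * SchwartzMap.seminorm ℝ 0 0 φ / c + 4/3 * K + 1, by positivity, fun z hz => ?_⟩
  have hz0 : 0 < z := hx₀.trans_le hz
  have hint :
      |∫ u in Ioi z, sin (Ψ u) * amplitudeQuotDeriv d k φ 0 u| ≤ 4/3 * K * z ^ (-(3:ℝ)/4) := by
    calc |∫ u in Ioi z, sin (Ψ u) * amplitudeQuotDeriv d k φ 0 u|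
        ≤ ∫ u in Ioi z, K * u ^ (-(7:ℝ)/4) :=
          (norm_eq_abs _).symm.trans_le <| norm_integral_le_of_norm_le
            ((integrableOn_Ioi_rpow_of_lt (a := -(7:ℝ)/4) (by norm_num) hz0).const_mul K)
            ((ae_restrict_iff' measurableSet_Ioi).2 (.of_forall fun u hu =>
              abs_sin_mul_le (hK u (hz.trans (le_of_lt hu)))))
      _ = 4/3 * K * z ^ (-(3:ℝ)/4) := by
          rw [integral_const_mul, integral_Ioi_rpow_of_lt (by norm_num) hz0]
          norm_num
          ring
  have hbdry : |sin (Ψ z) * (amplitude d φ 0 z / phaseDeriv k z)| ≤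
      |d| * SchwartzMap.seminorm ℝ 0 0 φ / c * z ^ (-(3:ℝ)/4) :=
    abs_sin_mul_le (abs_amplitude_div_phaseDeriv_le φ hc hz0 (hP z hz))
  calc |tailLimit d k Ψ φ z|
      ≤ |d| * SchwartzMap.seminorm ℝ 0 0 φ / c * z ^ (-(3:ℝ)/4) +
          4/3 * K * z ^ (-(3:ℝ)/4) := by
        rw [tailLimit]
        exact (abs_sub _ _).trans (by rw [abs_neg]; exact add_le_add hbdry hint)
    _ ≤ _ := by nlinarith [rpow_pos_of_pos hz0 (-(3:ℝ)/4)]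

theorem setIntegral_Iio_neg_eq_integral_cos_mul_amplitude {d x₀ z s : ℝ} {Ψ g φ : ℝ → ℝ}
    (hg : ∀ x, g x = if x < -x₀ then d * (-x) ^ (-(1:ℝ)/4) * cos (Ψ (-x)) else 0)
    (hz : x₀ ≤ z) :
    ∫ x in Iio (-z), g x * φ (x * s) = ∫ u in Ioi z, cos (Ψ u) * amplitude d φ s u := by
  rw [← integral_Iic_eq_integral_Iio, ← integral_comp_neg_Ioi]
  refine setIntegral_congr_fun measurableSet_Ioi fun u hu => ?_
  rw [hg, if_pos (by linarith [mem_Ioi.1 hu]), neg_neg, amplitude]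
  ring

/-- For the oscillatory tail `g` and a Schwartz function `φ`, the limit
`lim_{t→0⁺} ∫_{-∞}^{-z} g(x) φ(x t^{1/3}) dx` exists and is `O(z^{-3/4})`
uniformly: there is `C > 0` with `|limit| ≤ C z^{-3/4}` for all `z ≥ x₀`. -/
theorem oscillatory_tail_limit_bound (d φ₀ x₀ : ℝ) (hx₀ : 1 < x₀)
    (Ψ : ℝ → ℝ)
    (hΨ : ∀ x : ℝ, Ψ x = (2/3) * x ^ ((3:ℝ)/2) - (3/4) * d^2 * Real.log x + φ₀)
    (hΨ' : ∀ x ≥ x₀, x ^ ((1:ℝ)/2) - (3/4) * d^2 / x ≠ 0)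
    (g : ℝ → ℝ)
    (hg : ∀ x : ℝ, g x = if x < -x₀ then d * (-x) ^ (-(1:ℝ)/4) * Real.cos (Ψ (-x)) else 0)
    (φ : SchwartzMap ℝ ℝ) :
    ∃ C > (0:ℝ), ∀ z ≥ x₀, ∃ L : ℝ,
      Tendsto (fun t : ℝ => ∫ x in Set.Iio (-z), g x * φ (x * t ^ ((1:ℝ)/3)))
        (nhdsWithin 0 (Set.Ioi 0)) (nhds L) ∧
      |L| ≤ C * z ^ (-(3:ℝ)/4) := by
  set k : ℝ := 3/4 * d ^ 2
  have hk : 0 ≤ k := by positivity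
  have hx₀0 : 0 < x₀ := by linarith
  have hΨd : ∀ u > 0, HasDerivAt Ψ (phaseDeriv k u) u := fun u hu => hasDerivAt_phase hΨ hu
  have hΨm : Measurable Ψ := by rw [funext hΨ]; fun_prop
  obtain ⟨c, hc, hP⟩ := exists_mul_rpow_le_phaseDeriv hk hx₀0 hΨ'
  obtain ⟨K, hK⟩ := exists_abs_amplitudeQuotDeriv_le d φ hk hc hx₀.le hP
  obtain ⟨C, hC, hCz⟩ := exists_abs_tailLimit_le Ψ φ hc hx₀0 hP (hK 0 le_rfl)
  refine ⟨C, hC, fun z hz => ⟨tailLimit d k Ψ φ z, ?_, hCz z hz⟩⟩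
  have hlim := tendsto_integral_cos_mul_amplitude φ hΨd hΨm hc (hx₀0.trans_le hz)
    (fun u hu => hP u (hz.trans hu)) (fun s hs u hu => hK s hs u (hz.trans (le_of_lt hu)))
  refine (hlim.comp (tendsto_rpow_nhdsGT_zero (r := (1:ℝ)/3) (by norm_num))).congr fun t => ?_
  exact (setIntegral_Iio_neg_eq_integral_cos_mul_amplitude hg hz).symm
end

section
/- Let v : ℝ → ℝ be continuous with asymptotics v(x) = α/x + O(x^{-4}) as x → +∞ and v(x) = d(-x)^{-1/4} cos((2/3)(-x)^{3/2} - (3/4)d² ln(-x) + φ) + α/x + O((-x)^{-7/4}) as x → -∞, for real constants α, d, φ. Then the principal value integral c := lim_{y→∞} ∫_{-y}^{y} v(x) dx exists, and for every Schwartz function ψ, lim_{t→0^+} ∫_ℝ t^{-1/3} v(x t^{-1/3}) ψ(x) dx = c·ψ(0) + α·lim_{ε→0^+} ∫_{|x|>ε} ψ(x)/x dx. That is, t^{-1/3} v(x t^{-1/3}) → c·δ(x) + α·p.v.(1/x) in 𝒮'(ℝ) as t → 0^+. -/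
/-!
Let `w := v - α regInv`, where `regInv` is continuous, odd, bounded and equal to `1/x` for
`|x| ≥ 1`. Then `∫_0^y w` converges as `y → ±∞`: on the right `w = O(x⁻⁴)`; on the left
`w = d u^{-1/4} cos θ(u) + O(u^{-7/4})` with `u = -x`, and the oscillatory term converges after
one integration by parts against `sin θ`, since `θ' ∼ u^{1/2}`. As `regInv` is odd, the limit
`c = ∫ w` is also the limit of `∫_{-y}^{y} v`.

With `s = t^{1/3}` the pairing becomes `∫ v(y) ψ(ys) dy`. Integrating the `w` part by parts
against the primitive `W` of `w` gives `-∫ W(u/s) ψ'(u) du → -c ∫_0^∞ ψ' = c ψ(0)`. In the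
`regInv` part the region `|y| > 1` is exactly the truncated principal value integral at `ε = s`,
while the region `|y| ≤ 1` contributes `∫_{-1}^{1} y ψ(ys) dy → 0`.
-/

open Filter Real MeasureTheory Asymptotics intervalIntegral Set Topology
open scoped SchwartzMap

theorem Continuous.exists_forall_abs_le_of_tendsto {f : ℝ → ℝ} (hf : Continuous f) {A B : ℝ}
    (hbot : Tendsto f atBot (𝓝 A)) (htop : Tendsto f atTop (𝓝 B)) :
    ∃ M, ∀ x, |f x| ≤ M := by
  obtain ⟨a, ha⟩ := eventually_atBot.1 (hbot.abs.eventually_le_const (lt_add_one |A|))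
  obtain ⟨b, hb⟩ := eventually_atTop.1 (htop.abs.eventually_le_const (lt_add_one |B|))
  obtain ⟨C, hC⟩ := isCompact_Icc.exists_bound_of_continuousOn (hf.continuousOn (s := Icc a b))
  refine ⟨max (max (|A| + 1) (|B| + 1)) C, fun x => ?_⟩
  rcases le_or_gt x a with hxa | hxa
  · exact (ha x hxa).trans (le_max_of_le_left (le_max_left _ _))
  rcases le_or_gt b x with hbx | hbx
  · exact (hb x hbx).trans (le_max_of_le_left (le_max_right _ _))
  · exact (hC x ⟨hxa.le, hbx.le⟩).trans (le_max_right _ _)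

theorem isBigO_rpow_rpow_atTop {p q : ℝ} (h : p ≤ q) :
    (fun x : ℝ => x ^ p) =O[atTop] fun x => x ^ q := by
  refine IsBigO.of_bound 1 ?_
  filter_upwards [eventually_ge_atTop 1] with x hx
  rw [one_mul, norm_of_nonneg (by positivity), norm_of_nonneg (by positivity)]
  exact rpow_le_rpow_of_exponent_le hx h

theorem tendsto_neg_rpow_atBot {p : ℝ} (hp : p < 0) :
    Tendsto (fun x : ℝ => (-x) ^ p) atBot (𝓝 0) := by
  simpa only [neg_neg, Function.comp_def] using
    (tendsto_rpow_neg_atTop (neg_pos.2 hp)).comp tendsto_neg_atBot_atTop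

theorem integrableOn_Ioi_of_isBigO_rpow {g : ℝ → ℝ} {a p : ℝ} (hg : ContinuousOn g (Ici a))
    (hO : g =O[atTop] fun x => x ^ p) (hp : p < -1) : IntegrableOn g (Ioi a) :=
  ((hg.locallyIntegrableOn measurableSet_Ici).integrableOn_of_isBigO_atTop hO
    (integrableAtFilter_rpow_atTop_iff.2 hp)).mono_set Ioi_subset_Ici_self

theorem exists_tendsto_intervalIntegral_mul_deriv {h h' S s : ℝ → ℝ} {a M : ℝ}
    (hh : ∀ x ∈ Ici a, HasDerivAt h (h' x) x) (hS : ∀ x ∈ Ici a, HasDerivAt S (s x) x)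
    (hs : ContinuousOn s (Ici a)) (hh' : IntegrableOn h' (Ioi a))
    (hlim : Tendsto h atTop (𝓝 0)) (hSM : ∀ x ∈ Ici a, |S x| ≤ M) :
    ∃ L, Tendsto (fun T => ∫ x in a..T, h x * s x) atTop (𝓝 L) := by
  have hSc : ContinuousOn S (Ici a) := fun x hx => (hS x hx).continuousAt.continuousWithinAt
  have hh'S : IntegrableOn (fun x => h' x * S x) (Ioi a) :=
    Integrable.mul_bdd hh' ((hSc.mono Ioi_subset_Ici_self).aestronglyMeasurable measurableSet_Ioi)
      ((ae_restrict_iff' measurableSet_Ioi).2 (ae_of_all _ fun x hx => hSM x (mem_Ici_of_Ioi hx)))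
  have hbdry : Tendsto (fun T => h T * S T) atTop (𝓝 0) :=
    hlim.zero_mul_isBoundedUnder_le ⟨M, eventually_map.2 <|
      (eventually_ge_atTop a).mono fun x hx => (hSM x hx)⟩
  refine ⟨0 - h a * S a - ∫ x in Ioi a, h' x * S x,
    ((hbdry.sub_const _).sub (intervalIntegral_tendsto_integral_Ioi a hh'S tendsto_id)).congr' ?_⟩
  filter_upwards [eventually_ge_atTop a] with T hT
  have hsub : uIcc a T ⊆ Ici a := by rw [uIcc_of_le hT]; exact Icc_subset_Ici_self
  exact (intervalIntegral.integral_mul_deriv_eq_deriv_mul (fun x hx => hh x (hsub hx))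
    (fun x hx => hS x (hsub hx))
    ((intervalIntegrable_iff_integrableOn_Ioc_of_le hT).2 (hh'.mono_set Ioc_subset_Ioi_self))
    (hs.mono hsub).intervalIntegrable).symm

theorem setIntegral_eq_zero_of_odd {f : ℝ → ℝ} {s : Set ℝ} (hs : MeasurableSet s)
    (hneg : ∀ x, -x ∈ s ↔ x ∈ s) (hf : ∀ x, f (-x) = -f x) : ∫ x in s, f x = 0 := by
  have hodd : ∀ x, s.indicator f (-x) = -s.indicator f x := by
    intro x
    by_cases hx : x ∈ s <;> simp [indicator, hneg, hx, hf]
  have h := integral_neg_eq_self (s.indicator f) volume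
  simp only [hodd, MeasureTheory.integral_neg] at h
  rw [← MeasureTheory.integral_indicator hs]
  linarith

theorem tendsto_setIntegral_abs_gt {q : ℝ → ℝ} (hq : Integrable q) :
    Tendsto (fun ε => ∫ x in {x | ε < |x|}, q x) (𝓝 0) (𝓝 (∫ x, q x)) := by
  have hvol : Tendsto (fun ε : ℝ => volume (Icc (-ε) ε)) (𝓝 0) (𝓝 0) := by
    simp only [volume_Icc]
    simpa using ENNReal.tendsto_ofReal ((continuous_id.sub continuous_neg).tendsto (0:ℝ))
  have h := (tendsto_const_nhds (x := ∫ x, q x)).sub (hq.tendsto_setIntegral_nhds_zero hvol)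
  rw [sub_zero] at h
  refine h.congr fun ε => ?_
  have hcompl : {x : ℝ | ε < |x|}ᶜ = Icc (-ε) ε := by
    ext x; simp [abs_le]
  rw [← integral_add_compl (measurableSet_lt measurable_const measurable_abs) hq, hcompl]
  ring

theorem integral_mul_comp_mul_eq {f g : ℝ → ℝ} {σ : ℝ} (hσ : 0 < σ) :
    ∫ x, σ * f (x * σ) * g x = ∫ y, f y * g (y * σ⁻¹) := by
  have h := Measure.integral_comp_mul_right (fun y => f y * g (y * σ⁻¹)) σ
  simp only [mul_inv_cancel_right₀ hσ.ne', abs_inv, abs_of_pos hσ, smul_eq_mul] at h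
  simp only [mul_assoc, MeasureTheory.integral_const_mul, h, mul_inv_cancel_left₀ hσ.ne']

theorem tendsto_integral_comp_mul_inv_mul {W g : ℝ → ℝ} {c M : ℝ} (hW : Continuous W)
    (hWM : ∀ y, |W y| ≤ M) (hbot : Tendsto W atBot (𝓝 0)) (htop : Tendsto W atTop (𝓝 c))
    (hg : Integrable g) :
    Tendsto (fun s => ∫ u, W (u * s⁻¹) * g u) (𝓝[>] 0) (𝓝 (c * ∫ u in Ioi 0, g u)) := by
  rw [← MeasureTheory.integral_const_mul, ← MeasureTheory.integral_indicator measurableSet_Ioi]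
  refine tendsto_integral_filter_of_dominated_convergence (fun u => M * ‖g u‖)
    (Eventually.of_forall fun s =>
      (hW.comp (continuous_id.mul continuous_const)).aestronglyMeasurable.mul
        hg.aestronglyMeasurable)
    (Eventually.of_forall fun s => ae_of_all _ fun u => ?_) (hg.norm.const_mul M) ?_
  · rw [norm_mul]
    exact mul_le_mul_of_nonneg_right (hWM _) (norm_nonneg _)
  filter_upwards [compl_mem_ae_iff.2 (measure_singleton (0:ℝ))] with u (hu : u ≠ 0)
  rcases hu.lt_or_gt with hu | hu
  · rw [indicator_of_notMem (show u ∉ Ioi 0 from not_lt.2 hu.le)]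
    simpa using (hbot.comp (tendsto_inv_nhdsGT_zero.const_mul_atTop_of_neg hu)).mul_const (g u)
  · rw [indicator_of_mem (show u ∈ Ioi 0 from hu)]
    exact (htop.comp (tendsto_inv_nhdsGT_zero.const_mul_atTop hu)).mul_const (g u)

/-- The phase of the oscillatory term of `v` at `-∞`, in the variable `u = -x`,
with `β = (3/4) d²`. -/
noncomputable def oscPhase (β φ u : ℝ) : ℝ := (2/3) * u ^ ((3:ℝ)/2) - β * log u + φ

noncomputable def oscPhaseDeriv (β u : ℝ) : ℝ := u ^ ((1:ℝ)/2) - β * u ^ (-1:ℝ)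

noncomputable def oscPhaseSecondDeriv (β u : ℝ) : ℝ :=
  (1/2) * u ^ ((1:ℝ)/2 - 1) + β * u ^ ((-1:ℝ) - 1)

/-- `u^{-1/4} cos θ = oscAmplitude · (sin θ)'` with `oscAmplitude → 0` and `oscAmplitude'`
integrable: the factorisation that makes the oscillatory integral converge. -/
noncomputable def oscAmplitude (β u : ℝ) : ℝ := u ^ (-(1:ℝ)/4) / oscPhaseDeriv β u

noncomputable def oscAmplitudeDeriv (β u : ℝ) : ℝ :=
  -(1:ℝ)/4 * u ^ (-(1:ℝ)/4 - 1) / oscPhaseDeriv β u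
    - u ^ (-(1:ℝ)/4) * oscPhaseSecondDeriv β u / oscPhaseDeriv β u ^ 2

theorem hasDerivAt_oscPhase (β φ : ℝ) {u : ℝ} (hu : 0 < u) :
    HasDerivAt (oscPhase β φ) (oscPhaseDeriv β u) u := by
  have h := (((hasDerivAt_rpow_const (p := (3:ℝ)/2) (Or.inl hu.ne')).const_mul (2/3)).sub
    ((hasDerivAt_log hu.ne').const_mul β)).add_const φ
  refine h.congr_deriv ?_
  rw [oscPhaseDeriv, rpow_neg_one]
  norm_num
  ring

theorem hasDerivAt_oscPhaseDeriv (β : ℝ) {u : ℝ} (hu : 0 < u) :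
    HasDerivAt (oscPhaseDeriv β) (oscPhaseSecondDeriv β u) u := by
  refine ((hasDerivAt_rpow_const (Or.inl hu.ne')).sub
    ((hasDerivAt_rpow_const (Or.inl hu.ne')).const_mul β)).congr_deriv ?_
  rw [oscPhaseSecondDeriv]
  ring

theorem hasDerivAt_oscAmplitude (β : ℝ) {u : ℝ} (hu : 0 < u) (hne : oscPhaseDeriv β u ≠ 0) :
    HasDerivAt (oscAmplitude β) (oscAmplitudeDeriv β u) u := by
  refine ((hasDerivAt_rpow_const (p := -(1:ℝ)/4) (Or.inl hu.ne')).div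
    (hasDerivAt_oscPhaseDeriv β hu) hne).congr_deriv ?_
  rw [oscAmplitudeDeriv]
  field_simp

theorem continuousAt_oscAmplitudeDeriv (β : ℝ) {u : ℝ} (hu : 0 < u)
    (hne : oscPhaseDeriv β u ≠ 0) : ContinuousAt (oscAmplitudeDeriv β) u := by
  have hθ' := (hasDerivAt_oscPhaseDeriv β hu).continuousAt
  have hθ'' : ContinuousAt (oscPhaseSecondDeriv β) u := by
    unfold oscPhaseSecondDeriv
    fun_prop (disch := exact Or.inl hu.ne')
  have hne2 := pow_ne_zero 2 hne
  unfold oscAmplitudeDeriv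
  fun_prop (disch := first | assumption | exact Or.inl hu.ne')

theorem isEquivalent_oscPhaseDeriv (β : ℝ) :
    oscPhaseDeriv β ~[atTop] fun u => u ^ ((1:ℝ)/2) := by
  refine IsLittleO.isEquivalent ?_
  have hsub : oscPhaseDeriv β - (fun u => u ^ ((1:ℝ)/2)) = fun u => -β * u ^ (-1:ℝ) := by
    ext u; simp only [oscPhaseDeriv, Pi.sub_apply]; ring
  rw [hsub]
  have h0 : Tendsto (fun u : ℝ => -β * u ^ (-1:ℝ)) atTop (𝓝 0) := by
    simpa using (tendsto_rpow_neg_atTop zero_lt_one).const_mul (-β)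
  refine h0.isBigO_one ℝ |>.trans_isLittleO (isLittleO_one_left_iff ℝ |>.2 ?_)
  exact tendsto_norm_atTop_atTop.comp (tendsto_rpow_atTop (by norm_num))

theorem isBigO_inv_oscPhaseDeriv (β : ℝ) :
    (fun u => (oscPhaseDeriv β u)⁻¹) =O[atTop] fun u => u ^ (-(1:ℝ)/2) := by
  refine (isEquivalent_oscPhaseDeriv β).inv.isBigO.trans (EventuallyEq.isBigO ?_)
  filter_upwards [eventually_gt_atTop 0] with u hu
  rw [Pi.inv_apply, ← rpow_neg hu.le]
  norm_num

theorem isBigO_oscPhaseSecondDeriv (β : ℝ) :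
    oscPhaseSecondDeriv β =O[atTop] fun u => u ^ (-(1:ℝ)/2) :=
  ((isBigO_rpow_rpow_atTop (by norm_num)).const_mul_left _).add
    ((isBigO_rpow_rpow_atTop (by norm_num)).const_mul_left _)

theorem tendsto_oscAmplitude_atTop (β : ℝ) : Tendsto (oscAmplitude β) atTop (𝓝 0) := by
  refine (((isBigO_refl (fun u : ℝ => u ^ (-(1:ℝ)/4)) atTop).mul_atTop_rpow_of_isBigO_rpow
    _ _ (-(3/4)) (isBigO_inv_oscPhaseDeriv β) (by norm_num)).congr_left fun u => ?_).trans_tendsto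
    (tendsto_rpow_neg_atTop (by norm_num))
  simp only [oscAmplitude, Pi.mul_apply, div_eq_mul_inv]

theorem isBigO_oscAmplitudeDeriv (β : ℝ) :
    oscAmplitudeDeriv β =O[atTop] fun u => u ^ (-(7:ℝ)/4) := by
  have hinv := isBigO_inv_oscPhaseDeriv β
  have h₁ := ((isBigO_refl _ atTop).const_mul_left (-(1:ℝ)/4)).mul_atTop_rpow_of_isBigO_rpow
    _ _ _ hinv (by norm_num : -(1:ℝ)/4 - 1 + -(1:ℝ)/2 ≤ -(7:ℝ)/4)
  have h₂ := (isBigO_refl (fun u : ℝ => u ^ (-(1:ℝ)/4)) atTop).mul_atTop_rpow_of_isBigO_rpow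
    _ _ _ ((isBigO_oscPhaseSecondDeriv β).mul_atTop_rpow_of_isBigO_rpow _ _ _
      (hinv.mul_atTop_rpow_of_isBigO_rpow _ _ _ hinv le_rfl) le_rfl)
    (by norm_num : -(1:ℝ)/4 + (-(1:ℝ)/2 + (-(1:ℝ)/2 + -(1:ℝ)/2)) ≤ -(7:ℝ)/4)
  refine (h₁.sub h₂).congr_left fun u => ?_
  simp only [oscAmplitudeDeriv, Pi.mul_apply]
  ring

theorem eventually_exists_tendsto_integral_rpow_mul_cos_oscPhase (β φ : ℝ) :
    ∀ᶠ a in atTop, ∃ L, Tendsto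
      (fun T => ∫ u in a..T, u ^ (-(1:ℝ)/4) * cos (oscPhase β φ u)) atTop (𝓝 L) := by
  have hpos : ∀ᶠ u in atTop, 0 < oscPhaseDeriv β u :=
    ((isEquivalent_oscPhaseDeriv β).symm.tendsto_atTop
      (tendsto_rpow_atTop (by norm_num))).eventually_gt_atTop 0
  filter_upwards [eventually_gt_atTop 0, eventually_forall_ge_atTop.2 hpos] with a ha hθ'
  have hu : ∀ u ∈ Ici a, 0 < u := fun u hu => ha.trans_le hu
  have hne : ∀ u ∈ Ici a, oscPhaseDeriv β u ≠ 0 := fun u hu => (hθ' u hu).ne'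
  have hS : ∀ u ∈ Ici a, HasDerivAt (fun u => sin (oscPhase β φ u))
      (cos (oscPhase β φ u) * oscPhaseDeriv β u) u :=
    fun u hu' => (hasDerivAt_oscPhase β φ (hu u hu')).sin
  have hs : ContinuousOn (fun u => cos (oscPhase β φ u) * oscPhaseDeriv β u) (Ici a) :=
    fun u hu' => ((continuous_cos.continuousAt.comp
      (hasDerivAt_oscPhase β φ (hu u hu')).continuousAt).mul
        (hasDerivAt_oscPhaseDeriv β (hu u hu')).continuousAt).continuousWithinAt
  have hh'c : ContinuousOn (oscAmplitudeDeriv β) (Ici a) := fun u hu' =>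
    (continuousAt_oscAmplitudeDeriv β (hu u hu') (hne u hu')).continuousWithinAt
  obtain ⟨L, hL⟩ := exists_tendsto_intervalIntegral_mul_deriv
    (fun u hu' => hasDerivAt_oscAmplitude β (hu u hu') (hne u hu')) hS hs
    (integrableOn_Ioi_of_isBigO_rpow hh'c (isBigO_oscAmplitudeDeriv β) (by norm_num))
    (tendsto_oscAmplitude_atTop β) (fun u _ => abs_sin_le_one (oscPhase β φ u))
  refine ⟨L, hL.congr' ?_⟩
  filter_upwards [eventually_ge_atTop a] with T hT
  refine integral_congr fun u hu' => ?_
  rw [uIcc_of_le hT] at hu'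
  have := hne u hu'.1
  simp only [oscAmplitude]
  field_simp

section OscillatoryTail

variable {g : ℝ → ℝ} {d β φ : ℝ}

theorem tendsto_atBot_of_isBigO_oscPhase
    (hO : (fun x => g x - d * (-x) ^ (-(1:ℝ)/4) * cos (oscPhase β φ (-x)))
      =O[atBot] fun x => (-x) ^ (-(7:ℝ)/4)) :
    Tendsto g atBot (𝓝 0) := by
  have hosc : Tendsto (fun x => d * (-x) ^ (-(1:ℝ)/4) * cos (oscPhase β φ (-x))) atBot (𝓝 0) := by
    refine Tendsto.zero_mul_isBoundedUnder_le ?_ (isBoundedUnder_of ⟨1, fun x => abs_cos_le_one _⟩)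
    simpa using (tendsto_neg_rpow_atBot (by norm_num)).const_mul d
  simpa using (hO.trans_tendsto (tendsto_neg_rpow_atBot (by norm_num))).add hosc

theorem exists_tendsto_intervalIntegral_atBot_of_isBigO_oscPhase (hg : Continuous g)
    (hO : (fun x => g x - d * (-x) ^ (-(1:ℝ)/4) * cos (oscPhase β φ (-x)))
      =O[atBot] fun x => (-x) ^ (-(7:ℝ)/4)) :
    ∃ A, Tendsto (fun y => ∫ x in 0..y, g x) atBot (𝓝 A) := by
  obtain ⟨a, ⟨L, hL⟩, ha⟩ := ((eventually_exists_tendsto_integral_rpow_mul_cos_oscPhase β φ).and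
    (eventually_gt_atTop 0)).exists
  set f : ℝ → ℝ := fun u => u ^ (-(1:ℝ)/4) * cos (oscPhase β φ u)
  set ρ : ℝ → ℝ := fun u => g (-u) - d * f u
  have hfc : ContinuousOn f (Ici a) := fun u hu =>
    ((continuousAt_rpow_const _ _ (Or.inl (ha.trans_le hu).ne')).mul
      (continuous_cos.continuousAt.comp
        (hasDerivAt_oscPhase β φ (ha.trans_le hu)).continuousAt)).continuousWithinAt
  have hρc : ContinuousOn ρ (Ici a) :=
    (hg.comp continuous_neg).continuousOn.sub (continuousOn_const.mul hfc)
  have hρO : ρ =O[atTop] fun u => u ^ (-(7:ℝ)/4) := by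
    refine (hO.comp_tendsto tendsto_neg_atTop_atBot).congr (fun u => ?_) (fun u => ?_) <;>
      simp [ρ, f, mul_assoc]
  have hρ := intervalIntegral_tendsto_integral_Ioi a
    (integrableOn_Ioi_of_isBigO_rpow hρc hρO (by norm_num)) tendsto_id
  have hgneg : ∀ b c, IntervalIntegrable (fun u => g (-u)) volume b c :=
    (hg.comp continuous_neg).intervalIntegrable
  have hrefl : Tendsto (fun T => ∫ u in 0..T, g (-u)) atTop
      (𝓝 ((∫ u in 0..a, g (-u)) + (d * L + ∫ u in Ioi a, ρ u))) := by
    refine (tendsto_const_nhds.add ((hL.const_mul d).add hρ)).congr' ?_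
    filter_upwards [eventually_ge_atTop a] with T hT
    have hsub : uIcc a T ⊆ Ici a := by rw [uIcc_of_le hT]; exact Icc_subset_Ici_self
    have hsplit : ∫ u in a..T, g (-u) = d * (∫ u in a..T, f u) + ∫ u in a..T, ρ u := by
      rw [← intervalIntegral.integral_const_mul, ← integral_add
        (((hfc.mono hsub).intervalIntegrable).const_mul d) ((hρc.mono hsub).intervalIntegrable)]
      exact integral_congr fun u _ => by simp only [ρ]; ring
    rw [← integral_add_adjacent_intervals (hgneg 0 a) (hgneg a T), hsplit]
    rfl
  refine ⟨_, (hrefl.comp tendsto_neg_atBot_atTop).neg.congr fun y => ?_⟩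
  simp only [Function.comp_apply, intervalIntegral.integral_comp_neg, neg_neg, neg_zero,
    integral_symm y 0]

end OscillatoryTail

noncomputable def regInv (y : ℝ) : ℝ := y / max 1 (y ^ 2)

theorem continuous_regInv : Continuous regInv :=
  continuous_id.div (continuous_const.max (continuous_pow 2)) fun _ =>
    (zero_lt_one.trans_le (le_max_left _ _)).ne'

theorem regInv_neg (y : ℝ) : regInv (-y) = -regInv y := by
  simp only [regInv, neg_sq, neg_div]

theorem regInv_of_abs_le_one {y : ℝ} (hy : |y| ≤ 1) : regInv y = y := by
  rw [regInv, max_eq_left (sq_le_one_iff_abs_le_one y |>.2 hy), div_one]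

theorem regInv_of_one_le_abs {y : ℝ} (hy : 1 ≤ |y|) : regInv y = y⁻¹ := by
  have hy0 : y ≠ 0 := by rintro rfl; norm_num at hy
  rw [regInv, max_eq_right (one_le_sq_iff_one_le_abs y |>.2 hy), sq, div_mul_cancel_left₀ hy0]

theorem abs_regInv_le_one (y : ℝ) : |regInv y| ≤ 1 := by
  rcases le_total |y| 1 with hy | hy
  · rwa [regInv_of_abs_le_one hy]
  · rw [regInv_of_one_le_abs hy, abs_inv]
    exact inv_le_one_of_one_le₀ hy

theorem intervalIntegral_regInv (r : ℝ) : ∫ y in (-r)..r, regInv y = 0 := by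
  have h := intervalIntegral.integral_comp_neg (a := -r) (b := r) regInv
  simp only [regInv_neg, intervalIntegral.integral_neg, neg_neg] at h
  linarith

theorem isBigO_sub_mul_regInv_atTop {v : ℝ → ℝ} {α p : ℝ}
    (h : (fun x => v x - α / x) =O[atTop] fun x => x ^ p) :
    (fun x => v x - α * regInv x) =O[atTop] fun x => x ^ p := by
  refine h.congr' ?_ EventuallyEq.rfl
  filter_upwards [eventually_ge_atTop 1] with x hx
  rw [regInv_of_one_le_abs (hx.trans (le_abs_self x)), div_eq_mul_inv]

theorem isBigO_sub_mul_regInv_atBot {v f g : ℝ → ℝ} {α : ℝ}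
    (h : (fun x => v x - f x - α / x) =O[atBot] g) :
    (fun x => v x - α * regInv x - f x) =O[atBot] g := by
  refine h.congr' ?_ EventuallyEq.rfl
  filter_upwards [eventually_le_atBot (-1)] with x hx
  rw [regInv_of_one_le_abs (le_abs.2 (Or.inr (by linarith))), div_eq_mul_inv]
  ring

theorem setIntegral_one_lt_abs_inv_mul_comp_mul (f : ℝ → ℝ) {s : ℝ} (hs : 0 < s) :
    ∫ y in {y | 1 < |y|}, y⁻¹ * f (y * s) = ∫ x in {x | s < |x|}, f x / x := by
  have hmem : ∀ y, y * s ∈ {x | s < |x|} ↔ y ∈ {y : ℝ | 1 < |y|} := fun y => by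
    change s < |y * s| ↔ 1 < |y|
    rw [abs_mul, abs_of_pos hs]
    exact ⟨fun h => lt_of_mul_lt_mul_right (by simpa using h) hs.le, fun h => by nlinarith⟩
  have hpt : ∀ y, {y : ℝ | 1 < |y|}.indicator (fun y => y⁻¹ * f (y * s)) y
      = s * {x | s < |x|}.indicator (fun x => f x / x) (y * s) := fun y => by
    simp only [indicator_apply, hmem]
    split_ifs
    · field_simp
    · rw [mul_zero]
  rw [← MeasureTheory.integral_indicator (measurableSet_lt measurable_const measurable_abs),
    ← MeasureTheory.integral_indicator (measurableSet_lt measurable_const measurable_abs)]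
  simp only [hpt]
  rw [MeasureTheory.integral_const_mul, Measure.integral_comp_mul_right, abs_inv, abs_of_pos hs,
    smul_eq_mul, mul_inv_cancel_left₀ hs.ne']

theorem tendsto_integral_regInv_mul_comp_mul {f : ℝ → ℝ} {P : ℝ} (hf : Continuous f)
    (hfi : Integrable f)
    (hP : Tendsto (fun ε => ∫ x in {x | ε < |x|}, f x / x) (𝓝[>] 0) (𝓝 P)) :
    Tendsto (fun s => ∫ y, regInv y * f (y * s)) (𝓝[>] 0) (𝓝 P) := by
  have hcore : Tendsto (fun s => ∫ y in (-1)..1, y * f (y * s)) (𝓝 0) (𝓝 0) := by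
    have hc : Continuous fun s => ∫ y in (-1:ℝ)..1, y * f (y * s) :=
      intervalIntegral.continuous_parametric_intervalIntegral_of_continuous' (by fun_prop) _ _
    simpa [intervalIntegral.integral_mul_const] using hc.tendsto 0
  have h := (hcore.mono_left nhdsWithin_le_nhds).add hP
  rw [zero_add] at h
  refine h.congr' ?_
  filter_upwards [self_mem_nhdsWithin] with s (hs : 0 < s)
  have hint : Integrable fun y => regInv y * f (y * s) :=
    (hfi.comp_mul_right' hs.ne').bdd_mul continuous_regInv.aestronglyMeasurable
      (ae_of_all _ fun y => abs_regInv_le_one y)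
  have hcompl : (Icc (-1) 1)ᶜ = {y : ℝ | 1 < |y|} := by
    ext y; rw [mem_compl_iff, mem_Icc, ← abs_le, not_le]; rfl
  rw [← integral_add_compl measurableSet_Icc hint, hcompl,
    ← setIntegral_one_lt_abs_inv_mul_comp_mul f hs,
    intervalIntegral.integral_of_le (by norm_num), integral_Icc_eq_integral_Ioc]
  congr 1
  · exact setIntegral_congr_fun measurableSet_Ioc fun y hy =>
      by rw [regInv_of_abs_le_one (abs_le.2 ⟨hy.1.le, hy.2⟩)]
  · exact setIntegral_congr_fun (measurableSet_lt measurable_const measurable_abs) fun y hy =>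
      by rw [regInv_of_one_le_abs (le_of_lt hy)]

theorem SchwartzMap.tendsto_atBot_sup_atTop (ψ : 𝓢(ℝ, ℝ)) : Tendsto ψ (atBot ⊔ atTop) (𝓝 0) := by
  rw [← cocompact_eq_atBot_atTop]
  exact ψ.tendsto_cocompact

theorem SchwartzMap.integral_Ioi_deriv (ψ : 𝓢(ℝ, ℝ)) : ∫ u in Ioi 0, deriv ψ u = -ψ 0 := by
  simpa using integral_Ioi_of_hasDerivAt_of_tendsto ψ.continuous.continuousWithinAt
    (fun x _ => ψ.differentiableAt.hasDerivAt)
    (SchwartzMap.derivCLM ℝ ℝ ψ).integrable.integrableOn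
    (ψ.tendsto_atBot_sup_atTop.mono_left le_sup_right)

theorem SchwartzMap.integrable_sub_indicator_div (ψ : 𝓢(ℝ, ℝ)) :
    Integrable fun x => (ψ x - (Icc (-1) 1).indicator (fun _ => ψ 0) x) / x := by
  obtain ⟨M, hM0, hM⟩ := (SchwartzMap.derivCLM ℝ ℝ ψ).decay 0 0
  have hlip : ∀ x, |ψ x - ψ 0| ≤ M * |x| := by
    intro x
    simpa using convex_univ.norm_image_sub_le_of_norm_deriv_le (fun y _ => ψ.differentiableAt)
      (fun y _ => by simpa using hM y) (mem_univ 0) (mem_univ x)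
  refine (((integrableOn_const (C := M) (s := Icc (-1) 1) (by simp)).integrable_indicator
    measurableSet_Icc).add ψ.integrable.norm).mono' ?_ (ae_of_all _ fun x => ?_)
  · exact ((ψ.continuous.measurable.sub (measurable_const.indicator measurableSet_Icc)).div
      measurable_id).aestronglyMeasurable
  by_cases hx : x ∈ Icc (-1:ℝ) 1
  · simp only [Pi.add_apply, indicator_of_mem hx, norm_div, norm_eq_abs]
    rcases eq_or_ne x 0 with rfl | hx0
    · simp only [sub_self, abs_zero, div_zero]
      positivity
    · rw [div_le_iff₀ (abs_pos.2 hx0)]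
      exact (hlip x).trans (mul_le_mul_of_nonneg_right (le_add_of_nonneg_right (abs_nonneg _))
        (abs_nonneg x))
  · simp only [Pi.add_apply, indicator_of_notMem hx, sub_zero, zero_add, norm_div, norm_eq_abs]
    have hx1 : 1 ≤ |x| := by
      contrapose! hx
      exact abs_le.1 hx.le
    exact div_le_self (abs_nonneg _) hx1

theorem SchwartzMap.exists_tendsto_setIntegral_abs_gt_div (ψ : 𝓢(ℝ, ℝ)) :
    ∃ P, Tendsto (fun ε => ∫ x in {x | ε < |x|}, ψ x / x) (𝓝[>] 0) (𝓝 P) := by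
  set q := fun x => (ψ x - (Icc (-1) 1).indicator (fun _ => ψ 0) x) / x
  have hq : Integrable q := ψ.integrable_sub_indicator_div
  refine ⟨∫ x, q x, ((tendsto_setIntegral_abs_gt hq).mono_left nhdsWithin_le_nhds).congr' ?_⟩
  filter_upwards [self_mem_nhdsWithin] with ε (hε : 0 < ε)
  have hS : MeasurableSet {x : ℝ | ε < |x|} := measurableSet_lt measurable_const measurable_abs
  have hψ : IntegrableOn (fun x => ψ x / x) {x | ε < |x|} := by
    refine (ψ.integrable.norm.div_const ε).integrableOn.mono'
      (ψ.continuous.measurable.div measurable_id).aestronglyMeasurable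
      ((ae_restrict_iff' hS).2 (ae_of_all _ fun x (hx : ε < |x|) => ?_))
    rw [norm_div, norm_eq_abs, norm_eq_abs]
    exact div_le_div_of_nonneg_left (abs_nonneg _) hε hx.le
  have hdiff : ∫ x in {x | ε < |x|}, (ψ x / x - q x) = 0 := by
    have hpt : ∀ x, ψ x / x - q x = (Icc (-1) 1).indicator (fun _ => ψ 0) x / x := fun x => by
      simp only [q]; ring
    simp only [hpt]
    refine setIntegral_eq_zero_of_odd hS (fun x => by simp) (fun x => ?_)
    have hmem : -x ∈ Icc (-1:ℝ) 1 ↔ x ∈ Icc (-1:ℝ) 1 := by rw [← Set.mem_neg, neg_Icc, neg_neg]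
    simp only [indicator_apply, hmem, div_neg]
  rw [integral_sub hψ hq.integrableOn] at hdiff
  linarith

theorem SchwartzMap.integral_mul_comp_mul_eq_neg (ψ : 𝓢(ℝ, ℝ)) {W w : ℝ → ℝ} {M s : ℝ}
    (hW : ∀ y, HasDerivAt W (w y) y) (hWM : ∀ y, |W y| ≤ M)
    (hw : Integrable fun y => w y * ψ (y * s)) (hs : 0 < s) :
    ∫ y, w y * ψ (y * s) = -∫ u, W (u * s⁻¹) * deriv ψ u := by
  have hWc : Continuous W := continuous_iff_continuousAt.2 fun y => (hW y).continuousAt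
  have hWbdd {l : Filter ℝ} : IsBoundedUnder (· ≤ ·) l (norm ∘ W) :=
    isBoundedUnder_of ⟨M, fun y => hWM y⟩
  have hψ := ψ.tendsto_atBot_sup_atTop
  have hibp := integral_mul_deriv_eq_deriv_mul (u := W) (v := fun y => ψ (y * s))
    (v' := fun y => deriv ψ (y * s) * s) (fun x _ => hW x)
    (fun x _ => (ψ.differentiableAt.hasDerivAt).comp x (hasDerivAt_mul_const s))
    ((((SchwartzMap.derivCLM ℝ ℝ ψ).integrable.comp_mul_right' hs.ne').mul_const s).bdd_mul
      hWc.aestronglyMeasurable (ae_of_all _ hWM)) hw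
    (isBoundedUnder_le_mul_tendsto_zero hWbdd
      ((hψ.mono_left le_sup_left).comp (tendsto_id.atBot_mul_const hs)))
    (isBoundedUnder_le_mul_tendsto_zero hWbdd
      ((hψ.mono_left le_sup_right).comp (tendsto_id.atTop_mul_const hs)))
  have hscale := integral_mul_comp_mul_eq (f := W) (g := deriv ψ) (inv_pos.2 hs)
  rw [inv_inv] at hscale
  have hrescaled : ∫ u, W (u * s⁻¹) * deriv ψ u = ∫ y, W y * (deriv ψ (y * s) * s) :=
    calc ∫ u, W (u * s⁻¹) * deriv ψ u = s * ∫ x, s⁻¹ * W (x * s⁻¹) * deriv ψ x := by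
          simp only [mul_assoc, MeasureTheory.integral_const_mul, mul_inv_cancel_left₀ hs.ne']
      _ = ∫ y, W y * (deriv ψ (y * s) * s) := by
          rw [hscale, ← MeasureTheory.integral_const_mul]
          congr 1 with y
          ring
  rw [hrescaled, hibp]
  ring

theorem SchwartzMap.tendsto_integral_mul_comp_mul (ψ : 𝓢(ℝ, ℝ)) {w : ℝ → ℝ} {A B M : ℝ}
    (hw : Continuous w) (hwM : ∀ y, |w y| ≤ M)
    (hA : Tendsto (fun y => ∫ x in 0..y, w x) atBot (𝓝 A))
    (hB : Tendsto (fun y => ∫ x in 0..y, w x) atTop (𝓝 B)) :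
    Tendsto (fun s => ∫ y, w y * ψ (y * s)) (𝓝[>] 0) (𝓝 ((B - A) * ψ 0)) := by
  set W : ℝ → ℝ := fun y => (∫ x in 0..y, w x) - A
  have hW : ∀ y, HasDerivAt W (w y) y := fun y =>
    (integral_hasDerivAt_right (hw.intervalIntegrable _ _)
      hw.aestronglyMeasurable.stronglyMeasurableAtFilter hw.continuousAt).sub_const A
  have hWc : Continuous W := continuous_iff_continuousAt.2 fun y => (hW y).continuousAt
  have hWbot : Tendsto W atBot (𝓝 0) := by simpa using hA.sub_const A
  obtain ⟨MW, hMW⟩ := hWc.exists_forall_abs_le_of_tendsto hWbot (hB.sub_const A)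
  have h := (tendsto_integral_comp_mul_inv_mul hWc hMW hWbot (hB.sub_const A)
    (SchwartzMap.derivCLM ℝ ℝ ψ).integrable).neg
  simp only [SchwartzMap.derivCLM_apply] at h
  rw [ψ.integral_Ioi_deriv, mul_neg, neg_neg] at h
  refine h.congr' ?_
  filter_upwards [self_mem_nhdsWithin] with s (hs : 0 < s)
  rw [ψ.integral_mul_comp_mul_eq_neg hW hMW ((ψ.integrable.comp_mul_right' hs.ne').bdd_mul
    hw.aestronglyMeasurable (ae_of_all _ hwM)) hs]

section SubRegInv

variable {v : ℝ → ℝ} {α A B : ℝ}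

theorem tendsto_intervalIntegral_neg_self_of_sub_regInv (hv : Continuous v)
    (hA : Tendsto (fun y => ∫ x in 0..y, (v x - α * regInv x)) atBot (𝓝 A))
    (hB : Tendsto (fun y => ∫ x in 0..y, (v x - α * regInv x)) atTop (𝓝 B)) :
    Tendsto (fun y => ∫ x in (-y)..y, v x) atTop (𝓝 (B - A)) := by
  have hw : Continuous fun x => v x - α * regInv x :=
    hv.sub (continuous_const.mul continuous_regInv)
  refine (hB.sub (hA.comp tendsto_neg_atTop_atBot)).congr fun y => ?_
  rw [Function.comp_apply, integral_interval_sub_left (hw.intervalIntegrable _ _)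
    (hw.intervalIntegrable _ _), integral_sub (hv.intervalIntegrable _ _)
    ((continuous_regInv.intervalIntegrable _ _).const_mul α),
    intervalIntegral.integral_const_mul, intervalIntegral_regInv, mul_zero, sub_zero]

theorem SchwartzMap.tendsto_integral_mul_comp_mul_of_sub_regInv (ψ : 𝓢(ℝ, ℝ)) {M P : ℝ}
    (hv : Continuous v) (hM : ∀ y, |v y - α * regInv y| ≤ M)
    (hA : Tendsto (fun y => ∫ x in 0..y, (v x - α * regInv x)) atBot (𝓝 A))
    (hB : Tendsto (fun y => ∫ x in 0..y, (v x - α * regInv x)) atTop (𝓝 B))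
    (hP : Tendsto (fun ε => ∫ x in {x | ε < |x|}, ψ x / x) (𝓝[>] 0) (𝓝 P)) :
    Tendsto (fun s => ∫ y, v y * ψ (y * s)) (𝓝[>] 0) (𝓝 ((B - A) * ψ 0 + α * P)) := by
  have hw : Continuous fun x => v x - α * regInv x :=
    hv.sub (continuous_const.mul continuous_regInv)
  refine ((ψ.tendsto_integral_mul_comp_mul hw hM hA hB).add
    ((tendsto_integral_regInv_mul_comp_mul ψ.continuous ψ.integrable hP).const_mul α)).congr' ?_
  filter_upwards [self_mem_nhdsWithin] with s (hs : 0 < s)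
  have hψs := ψ.integrable.comp_mul_right' hs.ne'
  rw [← MeasureTheory.integral_const_mul, ← integral_add
    (hψs.bdd_mul hw.aestronglyMeasurable (ae_of_all _ hM))
    ((hψs.bdd_mul continuous_regInv.aestronglyMeasurable
      (ae_of_all _ abs_regInv_le_one)).const_mul α)]
  congr 1 with y
  ring

end SubRegInv

/-- If `v` is continuous with `v(x) = α/x + O(x⁻⁴)` as `x → +∞` and
`v(x) = d(-x)^{-1/4}cos((2/3)(-x)^{3/2} - (3/4)d² ln(-x) + φ) + α/x + O((-x)^{-7/4})`
as `x → -∞`, then the principal value `c = lim ∫_{-y}^y v` exists and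
`t^{-1/3} v(x t^{-1/3}) → c δ + α p.v.(1/x)` in `𝒮'(ℝ)` as `t → 0⁺`. -/
theorem selfsimilar_distributional_limit (α d φ : ℝ) (v : ℝ → ℝ) (hv : Continuous v)
    (hplus : (fun x : ℝ => v x - α / x) =O[atTop] fun x : ℝ => x ^ (-(4:ℝ)))
    (hminus : (fun x : ℝ => v x
        - d * (-x) ^ (-(1:ℝ)/4) *
            Real.cos ((2/3) * (-x) ^ ((3:ℝ)/2) - (3/4) * d^2 * Real.log (-x) + φ)
        - α / x)
      =O[atBot] fun x : ℝ => (-x) ^ (-(7:ℝ)/4)) :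
    ∃ c : ℝ,
      Tendsto (fun y : ℝ => ∫ x in (-y)..y, v x) atTop (nhds c) ∧
      ∀ ψ : SchwartzMap ℝ ℝ, ∃ P : ℝ,
        Tendsto (fun ε : ℝ => ∫ x in {x : ℝ | ε < |x|}, ψ x / x)
          (nhdsWithin 0 (Set.Ioi 0)) (nhds P) ∧
        Tendsto (fun t : ℝ => ∫ x : ℝ, t ^ (-(1:ℝ)/3) * v (x * t ^ (-(1:ℝ)/3)) * ψ x)
          (nhdsWithin 0 (Set.Ioi 0)) (nhds (c * ψ 0 + α * P)) := by
  set w : ℝ → ℝ := fun x => v x - α * regInv x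
  have hw : Continuous w := hv.sub (continuous_const.mul continuous_regInv)
  have hwtop : w =O[atTop] fun x => x ^ (-(4:ℝ)) := isBigO_sub_mul_regInv_atTop hplus
  have hwbot : (fun x => w x - d * (-x) ^ (-(1:ℝ)/4) * cos (oscPhase ((3/4) * d^2) φ (-x)))
      =O[atBot] fun x => (-x) ^ (-(7:ℝ)/4) := isBigO_sub_mul_regInv_atBot hminus
  obtain ⟨A, hA⟩ := exists_tendsto_intervalIntegral_atBot_of_isBigO_oscPhase hw hwbot
  have hB : Tendsto (fun y => ∫ x in 0..y, w x) atTop (𝓝 (∫ x in Ioi 0, w x)) :=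
    intervalIntegral_tendsto_integral_Ioi 0
      (integrableOn_Ioi_of_isBigO_rpow hw.continuousOn hwtop (by norm_num)) tendsto_id
  obtain ⟨M, hM⟩ := hw.exists_forall_abs_le_of_tendsto (tendsto_atBot_of_isBigO_oscPhase hwbot)
    (hwtop.trans_tendsto (tendsto_rpow_neg_atTop (by norm_num)))
  refine ⟨_, tendsto_intervalIntegral_neg_self_of_sub_regInv hv hA hB, fun ψ => ?_⟩
  obtain ⟨P, hP⟩ := ψ.exists_tendsto_setIntegral_abs_gt_div
  refine ⟨P, hP, ?_⟩
  have hscale : Tendsto (fun t : ℝ => (t ^ (-(1:ℝ)/3))⁻¹) (𝓝[>] 0) (𝓝[>] 0) :=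
    tendsto_inv_atTop_nhdsGT_zero.comp (tendsto_rpow_neg_nhdsGT_zero (by norm_num))
  refine ((ψ.tendsto_integral_mul_comp_mul_of_sub_regInv hv hM hA hB hP).comp hscale).congr' ?_
  filter_upwards [self_mem_nhdsWithin] with t (ht : 0 < t)
  rw [Function.comp_apply, integral_mul_comp_mul_eq (rpow_pos_of_pos ht _)]
end
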